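/- arXiv:1404.2662 — 12 statements merged into one kernel-verified Lean document; each statement's English description precedes it below -/
import Mathlib

section
/- Let k be a commutative ring with unit, A an associative unital k-algebra, M an A-bimodule on which k acts symmetrically, and f a 2-cocycle on A with coefficients in M. If e is an idempotent of A and x ∈ M, then the element t = (1 − 2e)·f(e, e) + e·x − x·e of M satisfies e·t + t·e + f(e, e) = t; consequently (e, t) is an idempotent of the extension algebra B defined by f. -/
/-- With `A`, `M`, a 2-cocycle `f`, and the extension algebra `B` as in the
paper, if `e` is an idempotent of `A` and `x ∈ M`, then
`t = (1 - 2e)·f(e,e) + e·x - x·e` satisfies `e·t + t·e + f(e,e) = t`, and consequently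
`(e, t)` is an idempotent of `B`. -/
theorem idempotent_lift_of_cocycle_extension
    {k A M B : Type*} [CommRing k] [Ring A] [Algebra k A]
    [AddCommGroup M] [Module A M] [Module Aᵐᵒᵖ M] [SMulCommClass A Aᵐᵒᵖ M]
    [Module k M] [IsScalarTower k A M]
    (hsymm : ∀ (c : k) (m : M),
      algebraMap k A c • m = MulOpposite.op (algebraMap k A c) • m)
    (f : A →ₗ[k] A →ₗ[k] M)
    (hcocycle : ∀ a b c : A,
      a • f b c - f (a * b) c + f a (b * c) - MulOpposite.op c • f a b = 0)
    [Ring B] (ι : A × M ≃ B)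
    (hadd : ∀ p q : A × M, ι (p.1 + q.1, p.2 + q.2) = ι p + ι q)
    (hmul : ∀ p q : A × M,
      ι (p.1 * q.1, p.1 • q.2 + MulOpposite.op q.1 • p.2 + f p.1 q.1) = ι p * ι q)
    (hone : ι (1, - f 1 1) = 1)
    (e : A) (he : IsIdempotentElem e) (x : M) :
    (e • ((1 - 2 * e) • f e e + e • x - MulOpposite.op e • x)
        + MulOpposite.op e • ((1 - 2 * e) • f e e + e • x - MulOpposite.op e • x)
        + f e e
      = (1 - 2 * e) • f e e + e • x - MulOpposite.op e • x) ∧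
    IsIdempotentElem (ι (e, (1 - 2 * e) • f e e + e • x - MulOpposite.op e • x)) := by

  have he' : e * e = e := he
  have key : e • f e e = MulOpposite.op e • f e e := by
    have h := hcocycle e e e
    rw [he'] at h
    have h2 : e • f e e - MulOpposite.op e • f e e = 0 := by
      rw [← h]; abel
    rw [sub_eq_zero] at h2; exact h2
  have h1 : e * (1 - 2 * e) = -e := by
    have : e * (1 - 2 * e) = e - 2 * (e * e) := by noncomm_ring
    rw [this, he']; noncomm_ring
  have h2 : (1 - 2 * e) * e = -e := by
    have : (1 - 2 * e) * e = e - 2 * (e * e) := by noncomm_ring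
    rw [this, he']; noncomm_ring
  have hop : MulOpposite.op e * MulOpposite.op e = MulOpposite.op e := by
    rw [← MulOpposite.op_mul, he']
  have main : e • ((1 - 2 * e) • f e e + e • x - MulOpposite.op e • x)
        + MulOpposite.op e • ((1 - 2 * e) • f e e + e • x - MulOpposite.op e • x)
        + f e e
      = (1 - 2 * e) • f e e + e • x - MulOpposite.op e • x := by
    simp only [smul_add, smul_sub, smul_smul, h1, he', hop]
    rw [← smul_comm ((1 - 2 * e) : A) (MulOpposite.op e) (f e e),
        ← key, smul_smul, h2,
        smul_comm (e : A) (MulOpposite.op e) x]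
    simp only [neg_smul, ← key, one_smul, sub_smul, mul_smul, two_smul, add_smul]
    abel
  refine ⟨main, ?_⟩
  show _ * _ = _
  rw [← hmul]
  congr 1
  exact Prod.ext he' main
end

section
/- Let k be a commutative ring with unit, A an associative unital k-algebra, M an A-bimodule on which k acts symmetrically, f a 2-cocycle on A with coefficients in M, and B the extension algebra defined by f. Then B is nil-clean if and only if A is nil-clean. -/
/-- A ring is nil-clean if every element is the sum of an idempotent and a nilpotent. -/
def IsNilCleanRing (R : Type*) [Ring R] : Prop :=
  ∀ a : R, ∃ e n : R, IsIdempotentElem e ∧ IsNilpotent n ∧ a = e + n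

/-- With `A`, `M`, a 2-cocycle `f` and the extension algebra `B` as in the
paper, `B` is nil-clean if and only if `A` is nil-clean. -/
theorem nilClean_of_cocycle_extension
    {k A M B : Type*} [CommRing k] [Ring A] [Algebra k A]
    [AddCommGroup M] [Module A M] [Module Aᵐᵒᵖ M] [SMulCommClass A Aᵐᵒᵖ M]
    [Module k M] [IsScalarTower k A M]
    (hsymm : ∀ (c : k) (m : M),
      algebraMap k A c • m = MulOpposite.op (algebraMap k A c) • m)
    (f : A →ₗ[k] A →ₗ[k] M)
    (hcocycle : ∀ a b c : A,
      a • f b c - f (a * b) c + f a (b * c) - MulOpposite.op c • f a b = 0)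
    [Ring B] (ι : A × M ≃ B)
    (hadd : ∀ p q : A × M, ι (p.1 + q.1, p.2 + q.2) = ι p + ι q)
    (hmul : ∀ p q : A × M,
      ι (p.1 * q.1, p.1 • q.2 + MulOpposite.op q.1 • p.2 + f p.1 q.1) = ι p * ι q)
    (hone : ι (1, - f 1 1) = 1) :
    IsNilCleanRing B ↔ IsNilCleanRing A := by
  -- ι (0,0) = 0
  have hz : ι ((0 : A), (0 : M)) = 0 := by
    have h := hadd (0, 0) (0, 0)
    simp only [add_zero] at h
    exact left_eq_add.mp h
  -- the projection ring hom π : B →+* A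
  let π : B →+* A :=
    { toFun := fun b => (ι.symm b).1
      map_one' := by rw [← hone]; simp only [Equiv.symm_apply_apply]
      map_mul' := by
        intro x y
        have h := hmul (ι.symm x) (ι.symm y)
        rw [Equiv.apply_symm_apply, Equiv.apply_symm_apply] at h
        show (ι.symm (x * y)).1 = (ι.symm x).1 * (ι.symm y).1
        rw [← h, Equiv.symm_apply_apply]
      map_zero' := by rw [← hz]; simp only [Equiv.symm_apply_apply]
      map_add' := by
        intro x y
        have h := hadd (ι.symm x) (ι.symm y)
        rw [Equiv.apply_symm_apply, Equiv.apply_symm_apply] at h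
        show (ι.symm (x + y)).1 = (ι.symm x).1 + (ι.symm y).1
        rw [← h, Equiv.symm_apply_apply] }
  have hπι : ∀ p : A × M, π (ι p) = p.1 := by
    intro p
    show (ι.symm (ι p)).1 = p.1
    rw [Equiv.symm_apply_apply]
  -- the kernel of π has square zero
  have hker : ∀ u v : B, π u = 0 → π v = 0 → u * v = 0 := by
    intro u v hu hv
    have h := hmul (ι.symm u) (ι.symm v)
    rw [Equiv.apply_symm_apply, Equiv.apply_symm_apply] at h
    have hu' : (ι.symm u).1 = 0 := hu
    have hv' : (ι.symm v).1 = 0 := hv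
    rw [hu', hv'] at h
    simp only [mul_zero, zero_smul, map_zero, LinearMap.zero_apply,
      MulOpposite.op_zero, add_zero, zero_add] at h
    rw [← h, hz]
  constructor
  · -- B nil-clean → A nil-clean
    intro hB a
    obtain ⟨e, n, he, hn, hb⟩ := hB (ι (a, 0))
    refine ⟨π e, π n, ?_, hn.map π, ?_⟩
    · show π e * π e = π e
      rw [← map_mul, he]
    · have h := hπι (a, 0)
      rw [hb, map_add] at h
      exact h.symm
  · -- A nil-clean → B nil-clean
    intro hA b
    obtain ⟨e, n, he, hn, hb⟩ := hA (π b)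
    set x : B := ι (e, 0) with hx
    have hπx : π x = e := hπι (e, 0)
    -- t := x^2 - x lies in the kernel
    have hπt : π (x ^ 2 - x) = 0 := by
      rw [map_sub, map_pow, hπx, sq, he, sub_self]
    have h4 : x ^ 4 - 2 * x ^ 3 + x ^ 2 = 0 := by
      have := hker (x ^ 2 - x) (x ^ 2 - x) hπt hπt
      calc x ^ 4 - 2 * x ^ 3 + x ^ 2 = (x ^ 2 - x) * (x ^ 2 - x) := by noncomm_ring
        _ = 0 := this
    set E : B := 3 * x ^ 2 - 2 * x ^ 3 with hE
    have hEidem : IsIdempotentElem E := by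
      show E * E = E
      have key : E * E - E = (4 * x ^ 2 - 4 * x - 3) * (x ^ 4 - 2 * x ^ 3 + x ^ 2) := by
        rw [hE]; noncomm_ring
      rw [h4, mul_zero] at key
      exact sub_eq_zero.mp key
    have hπE : π E = e := by
      have : π E = 3 * e ^ 2 - 2 * e ^ 3 := by
        rw [hE, map_sub, map_mul, map_mul, map_pow, map_pow, hπx, map_ofNat, map_ofNat]
      rw [this, sq, he, pow_succ, sq, he, he]
      noncomm_ring
    refine ⟨E, b - E, hEidem, ?_, by abel⟩
    -- b - E is nilpotent: its image n is nilpotent, and the kernel squares to zero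
    obtain ⟨m, hm⟩ := hn
    have hπN : π ((b - E) ^ m) = 0 := by
      rw [map_pow, map_sub, hπE, hb]
      simp [hm]
    exact ⟨m + m, by rw [pow_add]; exact hker _ _ hπN hπN⟩
end

section
/- Let k be a commutative ring with unit, A an associative unital k-algebra, M an A-bimodule on which k acts symmetrically, f a 2-cocycle on A with coefficients in M, and B the extension algebra defined by f. Then B is clean if and only if A is clean. -/
lemma idem_lift_aux {R : Type*} [Ring R] (x : R)
    (ht : (x*x - x) * (x*x - x) = 0) :
    ((x*x + x*x + x*x) - (x*x*x + x*x*x)) * ((x*x + x*x + x*x) - (x*x*x + x*x*x))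
      = (x*x + x*x + x*x) - (x*x*x + x*x*x) := by
  have h4 : x^4 = 2*x^3 - x^2 := by
    have h : x^4 - (2*x^3 - x^2) = (x*x - x) * (x*x - x) := by noncomm_ring
    exact sub_eq_zero.mp (h.trans ht)
  have h5 : x^5 = 2*x^4 - x^3 := by
    have h : x^5 - (2*x^4 - x^3) = x * ((x*x - x) * (x*x - x)) := by noncomm_ring
    rw [ht, mul_zero] at h
    exact sub_eq_zero.mp h
  have h6 : x^6 = 2*x^5 - x^4 := by
    have h : x^6 - (2*x^5 - x^4) = (x*x) * ((x*x - x) * (x*x - x)) := by noncomm_ring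
    rw [ht, mul_zero] at h
    exact sub_eq_zero.mp h
  have key : ((x*x + x*x + x*x) - (x*x*x + x*x*x)) * ((x*x + x*x + x*x) - (x*x*x + x*x*x))
      = 4*x^6 - 12*x^5 + 9*x^4 := by noncomm_ring
  rw [key, h6, h5, h4]
  noncomm_ring

lemma isUnit_aux {R : Type*} [Ring R] (x v : R)
    (h1 : (x*v - 1) * (x*v - 1) = 0) (h2 : (v*x - 1) * (v*x - 1) = 0) :
    IsUnit x := by
  have hr : x * (v * (2 - x*v)) = 1 := by
    have h : x * (v * (2 - x*v)) - 1 = -((x*v - 1) * (x*v - 1)) := by noncomm_ring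
    rw [h1, neg_zero] at h
    exact sub_eq_zero.mp h
  have hl : ((2 - v*x) * v) * x = 1 := by
    have h : ((2 - v*x) * v) * x - 1 = -((v*x - 1) * (v*x - 1)) := by noncomm_ring
    rw [h2, neg_zero] at h
    exact sub_eq_zero.mp h
  have heq : (2 - v*x) * v = v * (2 - x*v) := by
    calc (2 - v*x) * v = ((2 - v*x) * v) * (x * (v * (2 - x*v))) := by rw [hr, mul_one]
    _ = (((2 - v*x) * v) * x) * (v * (2 - x*v)) := by noncomm_ring
    _ = v * (2 - x*v) := by rw [hl, one_mul]
  exact ⟨⟨x, v * (2 - x*v), hr, by rw [← heq, hl]⟩, rfl⟩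

/-- A ring is clean if every element is the sum of an idempotent and a unit. -/
def IsCleanRing (R : Type*) [Ring R] : Prop :=
  ∀ a : R, ∃ e u : R, IsIdempotentElem e ∧ IsUnit u ∧ a = e + u

/-- With `A`, `M`, a 2-cocycle `f` and the extension algebra `B` as in the
paper, `B` is clean if and only if `A` is clean. -/
theorem clean_of_cocycle_extension
    {k A M B : Type*} [CommRing k] [Ring A] [Algebra k A]
    [AddCommGroup M] [Module A M] [Module Aᵐᵒᵖ M] [SMulCommClass A Aᵐᵒᵖ M]
    [Module k M] [IsScalarTower k A M]
    (hsymm : ∀ (c : k) (m : M),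
      algebraMap k A c • m = MulOpposite.op (algebraMap k A c) • m)
    (f : A →ₗ[k] A →ₗ[k] M)
    (hcocycle : ∀ a b c : A,
      a • f b c - f (a * b) c + f a (b * c) - MulOpposite.op c • f a b = 0)
    [Ring B] (ι : A × M ≃ B)
    (hadd : ∀ p q : A × M, ι (p.1 + q.1, p.2 + q.2) = ι p + ι q)
    (hmul : ∀ p q : A × M,
      ι (p.1 * q.1, p.1 • q.2 + MulOpposite.op q.1 • p.2 + f p.1 q.1) = ι p * ι q)
    (hone : ι (1, - f 1 1) = 1) :
    IsCleanRing B ↔ IsCleanRing A := by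
  classical
  -- the projection π : B → A
  let π : B → A := fun b => (ι.symm b).1
  have hπι : ∀ p : A × M, π (ι p) = p.1 := fun p => by simp [π]
  have hι00 : ι (0, 0) = 0 := by
    have h := hadd (0, 0) (0, 0)
    simp only [add_zero] at h
    exact add_eq_left.mp h.symm
  have π_zero : π 0 = 0 := by rw [← hι00, hπι]
  have π_one : π 1 = 1 := by rw [← hone, hπι]
  have π_add : ∀ x y : B, π (x + y) = π x + π y := by
    intro x y
    conv_lhs => rw [← ι.apply_symm_apply x, ← ι.apply_symm_apply y, ← hadd, hπι]
  have π_mul : ∀ x y : B, π (x * y) = π x * π y := by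
    intro x y
    conv_lhs => rw [← ι.apply_symm_apply x, ← ι.apply_symm_apply y, ← hmul, hπι]
  have π_neg : ∀ x : B, π (-x) = -π x := by
    intro x
    have h : π x + π (-x) = 0 := by rw [← π_add, add_neg_cancel, π_zero]
    exact (neg_eq_of_add_eq_zero_right h).symm
  have π_sub : ∀ x y : B, π (x - y) = π x - π y := by
    intro x y
    rw [sub_eq_add_neg, π_add, π_neg, sub_eq_add_neg]
  -- square-zero kernel
  have ker_mul : ∀ x y : B, π x = 0 → π y = 0 → x * y = 0 := by
    intro x y hx hy
    have hx' : (ι.symm x).1 = 0 := hx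
    have hy' : (ι.symm y).1 = 0 := hy
    rw [← ι.apply_symm_apply x, ← ι.apply_symm_apply y, ← hmul, hx', hy']
    simpa using hι00
  -- units descend
  have π_isUnit : ∀ x : B, IsUnit x → IsUnit (π x) := by
    intro x hx
    obtain ⟨U, rfl⟩ := hx
    exact ⟨⟨π (U : B), π ((U⁻¹ : Bˣ) : B),
      by rw [← π_mul, U.mul_inv, π_one],
      by rw [← π_mul, U.inv_mul, π_one]⟩, rfl⟩
  constructor
  · -- B clean → A clean
    intro hB a
    obtain ⟨e, u, he, hu, hsum⟩ := hB (ι (a, 0))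
    refine ⟨π e, π u, ?_, π_isUnit u hu, ?_⟩
    · show π e * π e = π e
      rw [← π_mul, he]
    · calc a = π (ι (a, 0)) := by rw [hπι]
      _ = π (e + u) := by rw [hsum]
      _ = π e + π u := π_add _ _
  · -- A clean → B clean
    intro hA b
    obtain ⟨e, u, he, hu, hsum⟩ := hA (π b)
    set x : B := ι (e, 0) with hxdef
    have hπx : π x = e := hπι _
    have hπt : π (x*x - x) = 0 := by
      rw [π_sub, π_mul, hπx, he, sub_self]
    have htt : (x*x - x) * (x*x - x) = 0 := ker_mul _ _ hπt hπt
    set E : B := (x*x + x*x + x*x) - (x*x*x + x*x*x) with hEdef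
    have hE : IsIdempotentElem E := idem_lift_aux x htt
    have hπE : π E = e := by
      rw [hEdef]
      simp only [π_sub, π_add, π_mul, hπx, he.eq]
      abel
    -- b - E is a unit
    obtain ⟨U, hU⟩ := hu
    have hπbE : π (b - E) = (U : A) := by
      rw [π_sub, hπE, hsum, hU]
      abel
    set v : B := ι ((U⁻¹ : Aˣ), 0) with hvdef
    have hπv : π v = ((U⁻¹ : Aˣ) : A) := hπι _
    have h1 : π ((b - E) * v - 1) = 0 := by
      rw [π_sub, π_mul, hπbE, hπv, π_one, U.mul_inv, sub_self]
    have h2 : π (v * (b - E) - 1) = 0 := by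
      rw [π_sub, π_mul, hπbE, hπv, π_one, U.inv_mul, sub_self]
    have hUnit : IsUnit (b - E) :=
      isUnit_aux (b - E) v (ker_mul _ _ h1 h1) (ker_mul _ _ h2 h2)
    exact ⟨E, b - E, hE, hUnit, by abel⟩
end

section
/- Let k be a commutative ring with unit, A an associative unital k-algebra, M an A-bimodule on which k acts symmetrically, f a 2-cocycle on A with coefficients in M, and B the extension algebra defined by f. Then B is an exchange ring if and only if A is an exchange ring. -/
lemma exch_idem_aux {R : Type*} [Ring R] (c : R) (h : (c*c - c)*(c*c - c) = 0) :
    IsIdempotentElem (c*c + c*c + c*c - (c*c*c + c*c*c)) := by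
  have key : (c*c + c*c + c*c - (c*c*c + c*c*c)) * (c*c + c*c + c*c - (c*c*c + c*c*c))
      - (c*c + c*c + c*c - (c*c*c + c*c*c))
      = (c*c - c)*(c*c - c)*(c*c + c*c + c*c + c*c - (c+c+c+c) - 3) := by noncomm_ring
  rw [h, zero_mul] at key
  exact sub_eq_zero.mp key

lemma exch_conj_idem {R : Type*} [Ring R] (e n : R) (he : e*e = e) (hn2 : n*n = 0)
    (hne : n*e = n) : IsIdempotentElem ((e - n)*(1+n)) := by
  have h1 : (1+n)*(1-n) = 1 := by
    have : (1+n)*(1-n) = 1 - n*n := by noncomm_ring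
    rw [this, hn2, sub_zero]
  have h2 : e - n = (1-n)*e := by
    have : (1-n)*e = e - n*e := by noncomm_ring
    rw [this, hne]
  unfold IsIdempotentElem
  rw [h2]
  have h3 : (1-n)*e*(1+n) * ((1-n)*e*(1+n)) = (1-n)*(e*(((1+n)*(1-n))*(e*(1+n)))) := by
    noncomm_ring
  rw [h3, h1, one_mul, ← mul_assoc e e, he, ← mul_assoc]

lemma exch_one_sub_conj {R : Type*} [Ring R] (e n : R) (hn2 : n*n = 0) :
    1 - (e - n)*(1+n) = (1 - e)*(1+n) := by
  have h3 : (1 - (e-n)*(1+n)) - (1-e)*(1+n) = n*n := by noncomm_ring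
  rw [hn2] at h3
  exact sub_eq_zero.mp h3


/-- A ring `R` is an exchange ring if for every `a ∈ R` there exists an idempotent
`e ∈ R` with `e ∈ aR` and `1 - e ∈ (1 - a)R`. -/
def IsExchangeRing (R : Type*) [Ring R] : Prop :=
  ∀ a : R, ∃ e : R, IsIdempotentElem e ∧ (∃ x : R, e = a * x) ∧
    (∃ y : R, 1 - e = (1 - a) * y)

/-- With `A`, `M`, a 2-cocycle `f` and the extension algebra `B` as in the
paper, `B` is an exchange ring if and only if `A` is an exchange ring. -/
theorem exchange_of_cocycle_extension
    {k A M B : Type*} [CommRing k] [Ring A] [Algebra k A]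
    [AddCommGroup M] [Module A M] [Module Aᵐᵒᵖ M] [SMulCommClass A Aᵐᵒᵖ M]
    [Module k M] [IsScalarTower k A M]
    (hsymm : ∀ (c : k) (m : M),
      algebraMap k A c • m = MulOpposite.op (algebraMap k A c) • m)
    (f : A →ₗ[k] A →ₗ[k] M)
    (hcocycle : ∀ a b c : A,
      a • f b c - f (a * b) c + f a (b * c) - MulOpposite.op c • f a b = 0)
    [Ring B] (ι : A × M ≃ B)
    (hadd : ∀ p q : A × M, ι (p.1 + q.1, p.2 + q.2) = ι p + ι q)
    (hmul : ∀ p q : A × M,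
      ι (p.1 * q.1, p.1 • q.2 + MulOpposite.op q.1 • p.2 + f p.1 q.1) = ι p * ι q)
    (hone : ι (1, - f 1 1) = 1) :
    IsExchangeRing B ↔ IsExchangeRing A := by
  -- the projection onto the first component
  set π : B → A := fun x => (ι.symm x).1 with hπ
  have hπmul : ∀ x y : B, π (x * y) = π x * π y := by
    intro x y
    have h := hmul (ι.symm x) (ι.symm y)
    rw [Equiv.apply_symm_apply, Equiv.apply_symm_apply] at h
    have h2 : ι.symm (x * y) = ((ι.symm x).1 * (ι.symm y).1,
        (ι.symm x).1 • (ι.symm y).2 + MulOpposite.op (ι.symm y).1 • (ι.symm x).2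
          + f (ι.symm x).1 (ι.symm y).1) := by
      rw [← h, Equiv.symm_apply_apply]
    simp only [hπ, h2]
  have hπadd : ∀ x y : B, π (x + y) = π x + π y := by
    intro x y
    have h := hadd (ι.symm x) (ι.symm y)
    rw [Equiv.apply_symm_apply, Equiv.apply_symm_apply] at h
    have h2 : ι.symm (x + y) = ((ι.symm x).1 + (ι.symm y).1, (ι.symm x).2 + (ι.symm y).2) := by
      rw [← h, Equiv.symm_apply_apply]
    simp only [hπ, h2]
  have hπone : π 1 = 1 := by
    have h2 : ι.symm (1 : B) = (1, - f 1 1) := by rw [← hone, Equiv.symm_apply_apply]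
    simp only [hπ, h2]
  have hι00 : ι (0, 0) = 0 := by
    have h := hadd (0, 0) (0, 0)
    simp only [add_zero] at h
    exact add_eq_left.mp h.symm
  have hπzero : π 0 = 0 := by
    have h2 : ι.symm (0 : B) = (0, 0) := by rw [← hι00, Equiv.symm_apply_apply]
    simp only [hπ, h2]
  have hπneg : ∀ x : B, π (-x) = - π x := by
    intro x
    have h := hπadd x (-x)
    rw [add_neg_cancel, hπzero] at h
    exact (neg_eq_of_add_eq_zero_right h.symm).symm
  have hπsub : ∀ x y : B, π (x - y) = π x - π y := by
    intro x y
    rw [sub_eq_add_neg, hπadd, hπneg, ← sub_eq_add_neg]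
  have hπι : ∀ (a : A) (m : M), π (ι (a, m)) = a := by
    intro a m
    simp only [hπ, Equiv.symm_apply_apply]
  clear_value π
  -- the kernel is square-zero
  have hN : ∀ u v : B, π u = 0 → π v = 0 → u * v = 0 := by
    intro u v hu hv
    have h := hmul (ι.symm u) (ι.symm v)
    rw [Equiv.apply_symm_apply, Equiv.apply_symm_apply] at h
    rw [hπ] at hu hv
    simp only at hu hv
    rw [hu, hv] at h
    simp only [zero_mul, zero_smul, MulOpposite.op_zero, map_zero, LinearMap.zero_apply,
      add_zero, zero_add] at h
    rw [← h, hι00]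
  clear hπ
  constructor
  · -- B exchange → A exchange
    intro hB a₀
    obtain ⟨e, he, ⟨x, hx⟩, ⟨y, hy⟩⟩ := hB (ι (a₀, 0))
    refine ⟨π e, ?_, ⟨π x, ?_⟩, ⟨π y, ?_⟩⟩
    · show π e * π e = π e
      rw [← hπmul, he]
    · rw [hx, hπmul, hπι]
    · have h1 := congrArg π hy
      rw [hπmul, hπsub, hπsub, hπone, hπι] at h1
      exact h1
  · -- A exchange → B exchange
    intro hA b
    obtain ⟨e₀, he₀, ⟨x₀, hx₀⟩, ⟨y₀, hy₀⟩⟩ := hA (π b)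
    obtain ⟨c, hc⟩ : ∃ c : B, c = b * ι (x₀, 0) := ⟨_, rfl⟩
    have hπc : π c = e₀ := by rw [hc, hπmul, hπι, ← hx₀]
    obtain ⟨d, hd⟩ : ∃ d : B, d = (1 - b) * ι (y₀, 0) := ⟨_, rfl⟩
    have hπd : π d = 1 - e₀ := by rw [hd, hπmul, hπι, hπsub, hπone, ← hy₀]
    -- first idempotent g ∈ bB
    have htc : (c*c - c) * (c*c - c) = 0 := by
      have h0 : π (c*c - c) = 0 := by rw [hπsub, hπmul, hπc, he₀, sub_self]
      exact hN _ _ h0 h0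
    obtain ⟨g, hg⟩ : ∃ g : B, g = c*c + c*c + c*c - (c*c*c + c*c*c) := ⟨_, rfl⟩
    have hgidem : g * g = g := by rw [hg]; exact exch_idem_aux c htc
    have hπg : π g = e₀ := by
      rw [hg, hπsub, hπadd, hπadd, hπadd, hπmul, hπmul, hπmul, hπc]
      rw [show e₀ * e₀ = e₀ from he₀, show e₀ * e₀ = e₀ from he₀]
      abel
    have hgmem : g = b * (ι (x₀, 0) * (c + c + c - (c*c + c*c))) := by
      rw [hg, ← mul_assoc, ← hc]
      noncomm_ring
    -- second idempotent g₂ ∈ (1-b)B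
    have htd : (d*d - d) * (d*d - d) = 0 := by
      have h0 : π (d*d - d) = 0 := by
        rw [hπsub, hπmul, hπd]
        rw [show (1 - e₀) * (1 - e₀) = 1 - e₀ from he₀.one_sub, sub_self]
      exact hN _ _ h0 h0
    obtain ⟨g₂, hg2⟩ : ∃ g₂ : B, g₂ = d*d + d*d + d*d - (d*d*d + d*d*d) := ⟨_, rfl⟩
    have hg2idem : g₂ * g₂ = g₂ := by rw [hg2]; exact exch_idem_aux d htd
    have hπg2 : π g₂ = 1 - e₀ := by
      rw [hg2, hπsub, hπadd, hπadd, hπadd, hπmul, hπmul, hπmul, hπd]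
      rw [show (1 - e₀) * (1 - e₀) = 1 - e₀ from he₀.one_sub,
        show (1 - e₀) * (1 - e₀) = 1 - e₀ from he₀.one_sub]
      abel
    have hg2mem : g₂ = (1 - b) * (ι (y₀, 0) * (d + d + d - (d*d + d*d))) := by
      rw [hg2, ← mul_assoc, ← hd]
      noncomm_ring
    -- the idempotent e' with 1 - e' ∈ (1-b)B exactly and e' ≡ g mod N
    obtain ⟨e', he'def⟩ : ∃ e' : B, e' = 1 - g₂ := ⟨_, rfl⟩
    have hg2idem' : IsIdempotentElem g₂ := hg2idem
    have he' : e' * e' = e' := by rw [he'def]; exact hg2idem'.one_sub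
    have hπe' : π e' = e₀ := by
      rw [he'def, hπsub, hπone, hπg2]; abel
    obtain ⟨n, hn⟩ : ∃ n : B, n = e' - g := ⟨_, rfl⟩
    have hπn : π n = 0 := by rw [hn, hπsub, hπe', hπg, sub_self]
    obtain ⟨n', hn'⟩ : ∃ n' : B, n' = n * e' := ⟨_, rfl⟩
    have hπn' : π n' = 0 := by rw [hn', hπmul, hπn, zero_mul]
    have hn2 : n' * n' = 0 := hN _ _ hπn' hπn'
    have hne : n' * e' = n' := by rw [hn', mul_assoc, he']
    -- key memberships
    have hkey : e' - n' = b * (ι (x₀, 0) * (c + c + c - (c*c + c*c)) * e') := by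
      have h1 : (e' - n) * e' = e' - n' := by rw [sub_mul, he', hn']
      have h2 : e' - n = g := by rw [hn]; abel
      rw [← mul_assoc, ← hgmem, ← h2, h1]
    refine ⟨(e' - n') * (1 + n'), exch_conj_idem e' n' he' hn2 hne,
      ⟨ι (x₀, 0) * (c + c + c - (c*c + c*c)) * e' * (1 + n'), ?_⟩,
      ⟨ι (y₀, 0) * (d + d + d - (d*d + d*d)) * (1 + n'), ?_⟩⟩
    · rw [hkey, mul_assoc]
    · rw [exch_one_sub_conj e' n' hn2]
      have h1 : 1 - e' = g₂ := by rw [he'def]; abel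
      rw [h1, hg2mem, mul_assoc]
end

section
/- Let k be a commutative ring with unit, A an associative unital k-algebra, M an A-bimodule on which k acts symmetrically, f a 2-cocycle on A with coefficients in M, and B the extension algebra defined by f. Then B is uniquely nil-clean if and only if A is uniquely nil-clean and every idempotent of A commutes with all elements of M (i.e. e·x = x·e for every idempotent e ∈ A and every x ∈ M). -/
/-- A ring is uniquely nil-clean if every element is the sum of an idempotent and a
nilpotent in exactly one way. -/
def IsUniquelyNilCleanRing (R : Type*) [Ring R] : Prop :=
  ∀ a : R, ∃! p : R × R, IsIdempotentElem p.1 ∧ IsNilpotent p.2 ∧ a = p.1 + p.2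

/-- In a uniquely nil-clean ring, idempotents are central. -/
lemma uniquelyNilClean_abelian {R : Type*} [Ring R] (hR : IsUniquelyNilCleanRing R)
    {E : R} (hE : IsIdempotentElem E) (r : R) : E * r = r * E := by
  have key : ∀ F : R, IsIdempotentElem F → F * r * (1 - F) = 0 := by
    intro F hF
    set n := F * r * (1 - F) with hn
    have h0 : (1 - F) * F = 0 := by rw [sub_mul, one_mul, hF.eq, sub_self]
    have hn2 : n * n = 0 := by
      have : n * n = F * r * ((1 - F) * F) * (r * (1 - F)) := by rw [hn]; noncomm_ring
      rw [this, h0, mul_zero, zero_mul]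
    have hFn : F * n = n := by rw [hn, ← mul_assoc, ← mul_assoc, hF.eq]
    have hnF : n * F = 0 := by rw [hn, mul_assoc, h0, mul_zero]
    have hidem : IsIdempotentElem (F + n) := by
      show (F + n) * (F + n) = F + n
      rw [add_mul, mul_add, mul_add, hF.eq, hFn, hnF, hn2, add_zero, add_zero]
    obtain ⟨p, _, hup⟩ := hR (F + n)
    have h1 := hup (F, n) ⟨hF, ⟨2, by rw [pow_two, hn2]⟩, rfl⟩
    have h2 := hup (F + n, 0) ⟨hidem, ⟨1, by simp⟩, by simp⟩
    have := congrArg Prod.snd (h1.trans h2.symm)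
    simpa using this
  have h1 := key E hE
  have h2 := key (1 - E) hE.one_sub
  rw [sub_sub_cancel] at h2
  have e1 : E * r - E * r * E = E * r * (1 - E) := by noncomm_ring
  have e2 : r * E - E * r * E = (1 - E) * r * E := by noncomm_ring
  rw [h1] at e1; rw [h2] at e2
  exact (sub_eq_zero.mp e1).trans (sub_eq_zero.mp e2).symm

/-- With `A`, `M`, a 2-cocycle `f` and the extension algebra `B` as in the
paper, `B` is uniquely nil-clean if and only if `A` is uniquely nil-clean and every
idempotent of `A` commutes with all elements of `M`. -/
theorem uniquelyNilClean_of_cocycle_extension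
    {k A M B : Type*} [CommRing k] [Ring A] [Algebra k A]
    [AddCommGroup M] [Module A M] [Module Aᵐᵒᵖ M] [SMulCommClass A Aᵐᵒᵖ M]
    [Module k M] [IsScalarTower k A M]
    (hsymm : ∀ (c : k) (m : M),
      algebraMap k A c • m = MulOpposite.op (algebraMap k A c) • m)
    (f : A →ₗ[k] A →ₗ[k] M)
    (hcocycle : ∀ a b c : A,
      a • f b c - f (a * b) c + f a (b * c) - MulOpposite.op c • f a b = 0)
    [Ring B] (ι : A × M ≃ B)
    (hadd : ∀ p q : A × M, ι (p.1 + q.1, p.2 + q.2) = ι p + ι q)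
    (hmul : ∀ p q : A × M,
      ι (p.1 * q.1, p.1 • q.2 + MulOpposite.op q.1 • p.2 + f p.1 q.1) = ι p * ι q)
    (hone : ι (1, - f 1 1) = 1) :
    IsUniquelyNilCleanRing B ↔
      IsUniquelyNilCleanRing A ∧
        ∀ e : A, IsIdempotentElem e → ∀ x : M, e • x = MulOpposite.op e • x := by
  classical
  -- Basic structural facts about `ι`.
  have haddS : ∀ b c : B, ι.symm (b + c)
      = ((ι.symm b).1 + (ι.symm c).1, (ι.symm b).2 + (ι.symm c).2) := by
    intro b c
    rw [Equiv.symm_apply_eq]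
    simpa using (hadd (ι.symm b) (ι.symm c)).symm
  have hmulS : ∀ b c : B, ι.symm (b * c)
      = ((ι.symm b).1 * (ι.symm c).1,
          (ι.symm b).1 • (ι.symm c).2 + MulOpposite.op (ι.symm c).1 • (ι.symm b).2
            + f (ι.symm b).1 (ι.symm c).1) := by
    intro b c
    rw [Equiv.symm_apply_eq]
    simpa using (hmul (ι.symm b) (ι.symm c)).symm
  have honeS : ι.symm (1 : B) = (1, - f 1 1) := by
    rw [Equiv.symm_apply_eq]; exact hone.symm
  have hz : ι ((0 : A), (0 : M)) = 0 := by
    have := hadd (0, 0) (0, 0)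
    simp only [add_zero] at this
    exact (left_eq_add.mp this)
  have hzS : ι.symm (0 : B) = (0, 0) := by
    rw [Equiv.symm_apply_eq]; exact hz.symm
  have hμsq : ∀ x y : M, ι (0, x) * ι (0, y) = 0 := by
    intro x y
    rw [← hmul (0, x) (0, y)]
    simpa using hz
  have hπadd : ∀ b c : B, (ι.symm (b + c)).1 = (ι.symm b).1 + (ι.symm c).1 := by
    intro b c; rw [haddS]
  have hπmul : ∀ b c : B, (ι.symm (b * c)).1 = (ι.symm b).1 * (ι.symm c).1 := by
    intro b c; rw [hmulS]
  have hπneg : ∀ b : B, (ι.symm (-b)).1 = -(ι.symm b).1 := by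
    intro b
    have h := hπadd b (-b)
    rw [add_neg_cancel, hzS] at h
    simp only [Prod.fst_zero] at h
    exact (neg_eq_of_add_eq_zero_right h.symm).symm
  have hπsub : ∀ b c : B, (ι.symm (b - c)).1 = (ι.symm b).1 - (ι.symm c).1 := by
    intro b c
    rw [sub_eq_add_neg, hπadd, hπneg, ← sub_eq_add_neg]
  have hπpow : ∀ (b : B) (n : ℕ), (ι.symm (b ^ n)).1 = (ι.symm b).1 ^ n := by
    intro b n
    induction n with
    | zero => simp [honeS]
    | succ n ih => rw [pow_succ, pow_succ, hπmul, ih]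
  -- nilpotency transfer
  have hnilB : ∀ b : B, IsNilpotent (ι.symm b).1 → IsNilpotent b := by
    rintro b ⟨n, hn⟩
    have hn1 : (ι.symm b).1 ^ (n + 1) = 0 := by rw [pow_succ, hn, zero_mul]
    have h1 : (ι.symm (b ^ (n + 1))).1 = 0 := by rw [hπpow, hn1]
    have h2 : b ^ (n + 1) = ι (0, (ι.symm (b ^ (n + 1))).2) := by
      conv_lhs => rw [← ι.apply_symm_apply (b ^ (n + 1))]
      congr 1
      exact Prod.ext h1 rfl
    refine ⟨(n + 1) * 2, ?_⟩
    rw [pow_mul, pow_two, h2, hμsq]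
  have hnilA : ∀ b : B, IsNilpotent b → IsNilpotent (ι.symm b).1 := by
    rintro b ⟨n, hn⟩
    exact ⟨n, by rw [← hπpow, hn, hzS]⟩
  -- idempotent lifting
  have hlift : ∀ e : A, IsIdempotentElem e →
      ∃ E : B, IsIdempotentElem E ∧ (ι.symm E).1 = e := by
    intro e he
    set x : B := ι (e, 0) with hxdef
    have hx1 : (ι.symm x).1 = e := by rw [hxdef, Equiv.symm_apply_apply]
    have ht1 : (ι.symm (x ^ 2 - x)).1 = 0 := by
      rw [hπsub, hπpow, hx1, pow_two, he.eq, sub_self]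
    have ht : x ^ 2 - x = ι (0, (ι.symm (x ^ 2 - x)).2) := by
      conv_lhs => rw [← ι.apply_symm_apply (x ^ 2 - x)]
      congr 1
      exact Prod.ext ht1 rfl
    have htsq : (x ^ 2 - x) * (x ^ 2 - x) = 0 := by rw [ht, hμsq]
    refine ⟨3 * x ^ 2 - 2 * x ^ 3, ?_, ?_⟩
    · show (3 * x ^ 2 - 2 * x ^ 3) * (3 * x ^ 2 - 2 * x ^ 3) = 3 * x ^ 2 - 2 * x ^ 3
      have key : (3 * x ^ 2 - 2 * x ^ 3) * (3 * x ^ 2 - 2 * x ^ 3) - (3 * x ^ 2 - 2 * x ^ 3)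
          = (x ^ 2 - x) * (x ^ 2 - x) * (4 * x ^ 2 - 4 * x - 3) := by noncomm_ring
      rw [htsq, zero_mul] at key
      exact sub_eq_zero.mp key
    · have h2 : (2 : B) = 1 + 1 := by norm_num
      have h3 : (3 : B) = 1 + 1 + 1 := by norm_num
      have hπ1 : (ι.symm (1 : B)).1 = 1 := by rw [honeS]
      have hπ2 : (ι.symm (2 : B)).1 = 2 := by rw [h2, hπadd, hπ1]; norm_num
      have hπ3 : (ι.symm (3 : B)).1 = 3 := by rw [h3, hπadd, hπadd, hπ1]; norm_num
      have he2 : e ^ 2 = e := by rw [pow_two, he.eq]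
      have he3 : e ^ 3 = e := by rw [pow_succ, he2, he.eq]
      rw [hπsub, hπmul, hπmul, hπpow, hπpow, hπ2, hπ3, hx1, he2, he3]
      have : (3 : A) * e - 2 * e = (3 - 2) * e := by rw [sub_mul]
      rw [this]; norm_num
  constructor
  · -- forward direction
    intro hB
    constructor
    · intro a
      obtain ⟨p, ⟨hpi, hpn, hpe⟩, hup⟩ := hB (ι (a, 0))
      refine ⟨((ι.symm p.1).1, (ι.symm p.2).1), ⟨?_, ?_, ?_⟩, ?_⟩
      · show _ * _ = _
        rw [← hπmul, hpi.eq]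
      · exact hnilA p.2 hpn
      · calc a = (ι.symm (ι (a, 0))).1 := by rw [Equiv.symm_apply_apply]
          _ = (ι.symm p.1).1 + (ι.symm p.2).1 := by rw [hpe, hπadd]
      · rintro ⟨e', q'⟩ ⟨he', hq', heq⟩
        obtain ⟨E', hE', hE'π⟩ := hlift e' he'
        have hN : IsNilpotent (ι (a, 0) - E') := by
          apply hnilB
          rw [hπsub, Equiv.symm_apply_apply, hE'π]
          have haq : a - e' = q' := by rw [heq]; abel
          rw [show ((a, (0 : M)).1 : A) = a from rfl, haq]
          exact hq'
        have h1 := hup (E', ι (a, 0) - E') ⟨hE', hN, by simp⟩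
        have hfst : E' = p.1 := congrArg Prod.fst h1
        have hsnd : ι (a, 0) - E' = p.2 := congrArg Prod.snd h1
        refine Prod.ext ?_ ?_
        · show e' = (ι.symm p.1).1
          rw [← hfst, hE'π]
        · show q' = (ι.symm p.2).1
          rw [← hsnd, hπsub, Equiv.symm_apply_apply, hE'π]
          rw [show ((a, (0 : M)).1 : A) = a from rfl, heq]
          abel
    · intro e he x
      obtain ⟨E, hE, hEπ⟩ := hlift e he
      have hc := uniquelyNilClean_abelian hB hE (ι (0, x))
      have hEeq : E = ι (e, (ι.symm E).2) := by
        conv_lhs => rw [← ι.apply_symm_apply E]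
        congr 1
        exact Prod.ext hEπ rfl
      have h1 : E * ι (0, x) = ι (0, e • x) := by
        conv_lhs => rw [hEeq, ← hmul (e, (ι.symm E).2) (0, x)]
        congr 1
        simp
      have h2 : ι (0, x) * E = ι (0, MulOpposite.op e • x) := by
        conv_lhs => rw [hEeq, ← hmul (0, x) (e, (ι.symm E).2)]
        congr 1
        simp
      rw [h1, h2] at hc
      have := ι.injective hc
      exact congrArg Prod.snd this
  · -- backward direction
    rintro ⟨hA, hcm⟩ b
    obtain ⟨⟨e, q⟩, ⟨he, hq, hsum⟩, huA⟩ := hA (ι.symm b).1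
    obtain ⟨E, hE, hEπ⟩ := hlift e he
    have hN : IsNilpotent (b - E) := by
      apply hnilB
      rw [hπsub, hEπ]
      have : (ι.symm b).1 - e = q := by rw [hsum]; abel
      rw [this]
      exact hq
    refine ⟨(E, b - E), ⟨hE, hN, by simp⟩, ?_⟩
    rintro ⟨E', N'⟩ ⟨hE', hN', hbe⟩
    have hpe' : IsIdempotentElem (ι.symm E').1 := by
      show _ * _ = _
      rw [← hπmul, hE'.eq]
    have h1 := huA ((ι.symm E').1, (ι.symm N').1)
      ⟨hpe', hnilA N' hN', by rw [hbe, hπadd]⟩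
    have hfst : (ι.symm E').1 = e := congrArg Prod.fst h1
    have idem_eq : ∀ F : B, IsIdempotentElem F → (ι.symm F).1 = e →
        e • (ι.symm F).2 + MulOpposite.op e • (ι.symm F).2 + f e e = (ι.symm F).2 := by
      intro F hF hFe
      have h := congrArg (fun b => (ι.symm b).2) hF.eq
      simp only [hmulS F F, hFe] at h
      exact h
    have q1 := idem_eq E' hE' hfst
    have q2 := idem_eq E hE hEπ
    set d : M := (ι.symm E').2 - (ι.symm E).2 with hddef
    have hd : e • d + MulOpposite.op e • d = d := by
      have := congrArg₂ (fun u v : M => u - v) q1 q2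
      rw [hddef]
      rw [smul_sub, smul_sub]
      calc e • (ι.symm E').2 - e • (ι.symm E).2
            + (MulOpposite.op e • (ι.symm E').2 - MulOpposite.op e • (ι.symm E).2)
          = (e • (ι.symm E').2 + MulOpposite.op e • (ι.symm E').2 + f e e)
            - (e • (ι.symm E).2 + MulOpposite.op e • (ι.symm E).2 + f e e) := by abel
        _ = (ι.symm E').2 - (ι.symm E).2 := by rw [q1, q2]
    rw [← hcm e he d] at hd
    have hed : e • d = 0 := by
      have h := congrArg (fun y : M => e • y) hd
      simp only [smul_add, smul_smul, he.eq] at h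
      exact (add_eq_right.mp h)
    have hd0 : d = 0 := by rw [← hd, hed, add_zero]
    have hE'E : E' = E := by
      apply ι.symm.injective
      exact Prod.ext (by rw [hfst, hEπ]) (sub_eq_zero.mp hd0)
    refine Prod.ext ?_ ?_
    · exact hE'E
    · show N' = b - E
      rw [← hE'E, hbe]
      abel
end

section
/- Let k be a commutative ring with unit, A an associative unital k-algebra, M an A-bimodule on which k acts symmetrically, f a 2-cocycle on A with coefficients in M, and B the extension algebra defined by f. Then B is uniquely clean if and only if A is uniquely clean and every idempotent of A commutes with all elements of M (i.e. e·x = x·e for every idempotent e ∈ A and every x ∈ M). -/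
/-! The projection `B → A`, `(a, m) ↦ a`, is a surjective ring homomorphism whose kernel
`{(0, m)}` squares to zero. Along a surjection with nil kernel units and idempotents lift, hence
so do clean decompositions, and only the uniqueness of the idempotent part among idempotents with
the same image can fail. Idempotents of a uniquely clean ring are central, and commuting
idempotents that differ by a nilpotent are equal, so `B` is uniquely clean iff `A` is and the
idempotents of `B` commute with the kernel. As `(e, w) (0, x) = (0, e • x)` and
`(0, x) (e, w) = (0, x • e)`, that is the condition on `M`. -/

/-- A ring is uniquely clean if every element is the sum of an idempotent and a
unit in exactly one way. -/
def IsUniquelyCleanRing (R : Type*) [Ring R] : Prop :=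
  ∀ a : R, ∃! p : R × R, IsIdempotentElem p.1 ∧ IsUnit p.2 ∧ a = p.1 + p.2

namespace IsUniquelyCleanRing

variable {R : Type*} [Ring R]

theorem eq_of_isNilpotent_sub (h : IsUniquelyCleanRing R) {e g : R} (he : IsIdempotentElem e)
    (hg : IsIdempotentElem g) (hnil : IsNilpotent (g - e)) : g = e :=
  congrArg Prod.fst <|
    (h (g - 1)).unique (y₁ := (g, -1)) (y₂ := (e, g - e - 1))
      ⟨hg, isUnit_one.neg, sub_eq_add_neg g 1⟩ ⟨he, hnil.isUnit_sub_one, by dsimp only; abel⟩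

theorem mul_mul_one_sub_eq_zero (h : IsUniquelyCleanRing R) {e : R} (he : IsIdempotentElem e)
    (r : R) : e * r * (1 - e) = 0 := by
  set t := e * r * (1 - e)
  have het : e * t = t := by simp only [t, ← mul_assoc, he.eq]
  have hte : t * e = 0 := by simp only [t, mul_assoc, he.one_sub_mul_self, mul_zero]
  have htt : t * t = 0 := by rw [← het, mul_assoc, ← mul_assoc t, hte, zero_mul, mul_zero]
  have hidem : IsIdempotentElem (e + t) := by
    rw [IsIdempotentElem, add_mul, mul_add, mul_add, he.eq, het, hte, htt, add_zero, add_zero]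
  exact add_eq_left.mp <|
    h.eq_of_isNilpotent_sub he hidem ⟨2, by rw [add_sub_cancel_left, sq, htt]⟩

theorem commute_of_isIdempotentElem (h : IsUniquelyCleanRing R) {e : R}
    (he : IsIdempotentElem e) (r : R) : Commute e r := by
  have hleft := h.mul_mul_one_sub_eq_zero he r
  have hright := h.mul_mul_one_sub_eq_zero he.one_sub r
  rw [mul_sub, mul_one, sub_eq_zero] at hleft
  rw [sub_sub_cancel, sub_mul, one_mul, sub_mul, sub_eq_zero] at hright
  exact hleft.trans hright.symm

end IsUniquelyCleanRing

section NilKernel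

variable {R S : Type*} [Ring R] [Ring S] {φ : R →+* S}

theorem isUnit_of_isUnit_map_of_ker_isNilpotent (hφ : Function.Surjective φ)
    (hker : ∀ x ∈ RingHom.ker φ, IsNilpotent x) {x : R} (hx : IsUnit (φ x)) : IsUnit x := by
  obtain ⟨y, hy⟩ := hφ ↑hx.unit⁻¹
  have hunit : ∀ z : R, φ z = 1 → IsUnit z := fun z hz ↦ by
    simpa using (hker (z - 1) (by simp [RingHom.mem_ker, hz])).isUnit_add_one
  obtain ⟨u, hu⟩ := hunit (x * y) (by simp [hy])
  obtain ⟨v, hv⟩ := hunit (y * x) (by simp [hy])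
  refine isUnit_iff_exists_and_exists.mpr ⟨⟨y * ↑u⁻¹, ?_⟩, ⟨↑v⁻¹ * y, ?_⟩⟩
  · rw [← mul_assoc, ← hu, Units.mul_inv]
  · rw [mul_assoc, ← hv, Units.inv_mul]

theorem exists_isIdempotentElem_isUnit_sub_of_ker_isNilpotent (hφ : Function.Surjective φ)
    (hker : ∀ x ∈ RingHom.ker φ, IsNilpotent x) {r : R} {e u : S} (he : IsIdempotentElem e)
    (hu : IsUnit u) (hr : φ r = e + u) :
    ∃ E : R, IsIdempotentElem E ∧ φ E = e ∧ IsUnit (r - E) := by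
  obtain ⟨E, hE, rfl⟩ := exists_isIdempotentElem_eq_of_ker_isNilpotent φ hker e (hφ e) he
  refine ⟨E, hE, rfl, isUnit_of_isUnit_map_of_ker_isNilpotent hφ hker ?_⟩
  rwa [map_sub, hr, add_sub_cancel_left]

theorem IsUniquelyCleanRing.of_surjective_of_ker_isNilpotent (h : IsUniquelyCleanRing R)
    (hφ : Function.Surjective φ) (hker : ∀ x ∈ RingHom.ker φ, IsNilpotent x) :
    IsUniquelyCleanRing S := by
  intro s
  obtain ⟨r, rfl⟩ := hφ s
  obtain ⟨⟨e, u⟩, ⟨he, hu, rfl⟩, huniq⟩ := h r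
  refine ⟨(φ e, φ u), ⟨he.map φ, hu.map φ, map_add φ e u⟩, ?_⟩
  rintro ⟨e', u'⟩ ⟨he', hu', hsum⟩
  obtain ⟨E, hE, rfl, hunit⟩ :=
    exists_isIdempotentElem_isUnit_sub_of_ker_isNilpotent hφ hker he' hu' hsum
  have hEu := huniq (E, e + u - E) ⟨hE, hunit, (add_sub_cancel _ _).symm⟩
  simp only [Prod.mk.injEq] at hEu ⊢
  refine ⟨congrArg φ hEu.1, ?_⟩
  rw [← hEu.2, map_sub, hsum, add_sub_cancel_left]

theorem IsUniquelyCleanRing.of_ker_isNilpotent_of_commute (h : IsUniquelyCleanRing S)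
    (hφ : Function.Surjective φ) (hker : ∀ x ∈ RingHom.ker φ, IsNilpotent x)
    (hcomm : ∀ E : R, IsIdempotentElem E → ∀ t ∈ RingHom.ker φ, Commute E t) :
    IsUniquelyCleanRing R := by
  intro r
  obtain ⟨⟨e, u⟩, ⟨he, hu, hsum⟩, huniq⟩ := h (φ r)
  obtain ⟨E, hE, rfl, hunit⟩ :=
    exists_isIdempotentElem_isUnit_sub_of_ker_isNilpotent hφ hker he hu hsum
  refine ⟨(E, r - E), ⟨hE, hunit, (add_sub_cancel _ _).symm⟩, ?_⟩
  rintro ⟨E', U'⟩ ⟨hE', hU', rfl⟩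
  have himage : φ E' = φ E := congrArg Prod.fst <|
    huniq (φ E', φ U') ⟨hE'.map φ, hU'.map φ, map_add φ E' U'⟩
  have hdiff : E' - E ∈ RingHom.ker φ := by rw [RingHom.mem_ker, map_sub, himage, sub_self]
  have hEE' : Commute E E' := by
    simpa using (hcomm E hE _ hdiff).add_right (Commute.refl E)
  obtain rfl := eq_of_isNilpotent_sub_of_isIdempotentElem_of_commute hE' hE (hker _ hdiff) hEE'.symm
  simp

theorem isUniquelyCleanRing_iff_of_ker_isNilpotent (hφ : Function.Surjective φ)
    (hker : ∀ x ∈ RingHom.ker φ, IsNilpotent x) :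
    IsUniquelyCleanRing R ↔ IsUniquelyCleanRing S ∧
      ∀ E : R, IsIdempotentElem E → ∀ t ∈ RingHom.ker φ, Commute E t :=
  ⟨fun h ↦ ⟨h.of_surjective_of_ker_isNilpotent hφ hker,
      fun _ hE t _ ↦ h.commute_of_isIdempotentElem hE t⟩,
    fun ⟨hS, hcomm⟩ ↦ hS.of_ker_isNilpotent_of_commute hφ hker hcomm⟩

end NilKernel

section CocycleExtension

variable {k A M B : Type*} [CommRing k] [Ring A] [Algebra k A] [AddCommGroup M] [Module A M]
  [Module Aᵐᵒᵖ M] [Module k M] {f : A →ₗ[k] A →ₗ[k] M} [Ring B] {ι : A × M ≃ B}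

variable (hadd : ∀ p q : A × M, ι (p.1 + q.1, p.2 + q.2) = ι p + ι q)
  (hmul : ∀ p q : A × M,
    ι (p.1 * q.1, p.1 • q.2 + MulOpposite.op q.1 • p.2 + f p.1 q.1) = ι p * ι q)
  (hone : ι (1, - f 1 1) = 1)

def cocycleExtensionFst : B →+* A :=
  RingHom.mk'
    { toFun := fun b ↦ (ι.symm b).1
      map_one' := by rw [← hone, Equiv.symm_apply_apply]
      map_mul' := fun x y ↦ by
        rw [← ι.apply_symm_apply x, ← ι.apply_symm_apply y, ← hmul]
        simp only [Equiv.symm_apply_apply] }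
    fun x y ↦ by
      simp only [MonoidHom.coe_mk, OneHom.coe_mk]
      rw [← ι.apply_symm_apply x, ← ι.apply_symm_apply y, ← hadd]
      simp only [Equiv.symm_apply_apply]

@[simp]
theorem cocycleExtensionFst_apply (p : A × M) :
    cocycleExtensionFst hadd hmul hone (ι p) = p.1 :=
  congrArg Prod.fst (ι.symm_apply_apply p)

theorem cocycleExtensionFst_surjective :
    Function.Surjective (cocycleExtensionFst hadd hmul hone) :=
  fun a ↦ ⟨ι (a, 0), cocycleExtensionFst_apply hadd hmul hone _⟩

theorem cocycleExtensionFst_ker_isNilpotent :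
    ∀ x ∈ RingHom.ker (cocycleExtensionFst hadd hmul hone), IsNilpotent x := by
  intro x hx
  obtain ⟨⟨a, m⟩, rfl⟩ := ι.surjective x
  obtain rfl : a = 0 := by simpa [RingHom.mem_ker] using hx
  refine ⟨2, ?_⟩
  have hzero : ι (0, 0) = 0 := (AddEquiv.mk' ι hadd).map_zero
  rw [sq, ← hmul]
  simpa using hzero

theorem commute_ker_cocycleExtensionFst_iff :
    (∀ E : B, IsIdempotentElem E →
        ∀ t ∈ RingHom.ker (cocycleExtensionFst hadd hmul hone), Commute E t) ↔
      ∀ e : A, IsIdempotentElem e → ∀ x : M, e • x = MulOpposite.op e • x := by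
  have commute_iff (a : A) (m x : M) :
      Commute (ι (a, m)) (ι (0, x)) ↔ a • x = MulOpposite.op a • x := by
    rw [Commute, SemiconjBy, ← hmul, ← hmul, ι.injective.eq_iff]
    simp
  constructor
  · intro h e he x
    obtain ⟨E, hE, hEe⟩ := exists_isIdempotentElem_eq_of_ker_isNilpotent _
      (cocycleExtensionFst_ker_isNilpotent hadd hmul hone) e
      (cocycleExtensionFst_surjective hadd hmul hone e) he
    obtain ⟨⟨a, m⟩, rfl⟩ := ι.surjective E
    obtain rfl : a = e := by simpa using hEe
    exact (commute_iff a m x).mp (h _ hE _ (by simp [RingHom.mem_ker]))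
  · intro h E hE t ht
    obtain ⟨⟨a, m⟩, rfl⟩ := ι.surjective E
    obtain ⟨⟨b, x⟩, rfl⟩ := ι.surjective t
    obtain rfl : b = 0 := by simpa [RingHom.mem_ker] using ht
    refine (commute_iff a m x).mpr (h a ?_ x)
    simpa using hE.map (cocycleExtensionFst hadd hmul hone)

end CocycleExtension

theorem uniquelyClean_of_cocycle_extension_general
    {k A M B : Type*} [CommRing k] [Ring A] [Algebra k A]
    [AddCommGroup M] [Module A M] [Module Aᵐᵒᵖ M] [Module k M]
    (f : A →ₗ[k] A →ₗ[k] M) [Ring B] (ι : A × M ≃ B)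
    (hadd : ∀ p q : A × M, ι (p.1 + q.1, p.2 + q.2) = ι p + ι q)
    (hmul : ∀ p q : A × M,
      ι (p.1 * q.1, p.1 • q.2 + MulOpposite.op q.1 • p.2 + f p.1 q.1) = ι p * ι q)
    (hone : ι (1, - f 1 1) = 1) :
    IsUniquelyCleanRing B ↔
      IsUniquelyCleanRing A ∧
        ∀ e : A, IsIdempotentElem e → ∀ x : M, e • x = MulOpposite.op e • x := by
  rw [isUniquelyCleanRing_iff_of_ker_isNilpotent (cocycleExtensionFst_surjective hadd hmul hone)
    (cocycleExtensionFst_ker_isNilpotent hadd hmul hone), commute_ker_cocycleExtensionFst_iff]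

/-- With `A`, `M`, a 2-cocycle `f` and the extension algebra `B` as in the
paper, `B` is uniquely clean if and only if `A` is uniquely clean and every
idempotent of `A` commutes with all elements of `M`. -/
theorem uniquelyClean_of_cocycle_extension
    {k A M B : Type*} [CommRing k] [Ring A] [Algebra k A]
    [AddCommGroup M] [Module A M] [Module Aᵐᵒᵖ M] [SMulCommClass A Aᵐᵒᵖ M]
    [Module k M] [IsScalarTower k A M]
    (hsymm : ∀ (c : k) (m : M),
      algebraMap k A c • m = MulOpposite.op (algebraMap k A c) • m)
    (f : A →ₗ[k] A →ₗ[k] M)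
    (hcocycle : ∀ a b c : A,
      a • f b c - f (a * b) c + f a (b * c) - MulOpposite.op c • f a b = 0)
    [Ring B] (ι : A × M ≃ B)
    (hadd : ∀ p q : A × M, ι (p.1 + q.1, p.2 + q.2) = ι p + ι q)
    (hmul : ∀ p q : A × M,
      ι (p.1 * q.1, p.1 • q.2 + MulOpposite.op q.1 • p.2 + f p.1 q.1) = ι p * ι q)
    (hone : ι (1, - f 1 1) = 1) :
    IsUniquelyCleanRing B ↔
      IsUniquelyCleanRing A ∧
        ∀ e : A, IsIdempotentElem e → ∀ x : M, e • x = MulOpposite.op e • x :=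
  uniquelyClean_of_cocycle_extension_general f ι hadd hmul hone
end

section
/- Let A be an associative unital k-algebra and let A_t be a formal deformation of A, given by a sequence of k-bilinear maps αᵢ : A × A → A (α₀ the multiplication of A) making A[[t]] an associative unital k[[t]]-algebra with unit 1 via the product whose tᵏ-coefficient on (Σ aₙtⁿ)·(Σ bₚtᵖ) is Σ_{m+n+p=k} α_m(aₙ, bₚ). If e is a central idempotent of A, then there exists a unique idempotent e_t of A_t whose constant term is e. -/
open PowerSeries
open scoped Polynomial
open Finset.HasAntidiagonal (antidiagonal mem_antidiagonal)

/-!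
In degree `n + 1` the equation `E * E = E` for `E = Σ xₙ tⁿ` with `x₀ = e` reads
`x = r + e * x + x * e`, where `x = x_{n+1}` and `r` depends only on `x₀, …, xₙ`: only
`α₀` can pair the top coefficient with the constant one. For central `e` this says
`(1 - 2e) x = r`, and `1 - 2e` is an involution, so `x = (1 - 2e) r` is forced. Hence the
coefficients of the lift are determined recursively, which gives existence and uniqueness.
-/

namespace PowerSeries

variable {R : Type*}

-- The `if` only serves termination: `trunc (n + 1)` discards those coefficients anyway.
noncomputable def coeffRec [Semiring R] (a : R) (F : ℕ → R[X] → R) : ℕ → R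
  | 0 => a
  | n + 1 => F n (trunc (n + 1) (mk fun k => if k ≤ n then coeffRec a F k else 0))

lemma trunc_eq_trunc_of_coeff_eq [Semiring R] {n : ℕ} {p q : R⟦X⟧}
    (h : ∀ k < n, coeff k p = coeff k q) :
    trunc n p = trunc n q := by
  ext k
  simp only [coeff_trunc]
  split_ifs with hk
  exacts [h k hk, rfl]

theorem existsUnique_coeff_recursion [Semiring R] (a : R) (F : ℕ → R[X] → R) :
    ∃! p : R⟦X⟧, constantCoeff p = a ∧ ∀ n, coeff (n + 1) p = F n (trunc (n + 1) p) := by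
  have hrec : ∀ n, coeff (n + 1) (mk (coeffRec a F)) =
      F n (trunc (n + 1) (mk (coeffRec a F))) := fun n => by
    rw [coeff_mk, coeffRec]
    congr 1
    exact trunc_eq_trunc_of_coeff_eq fun k hk => by simp [Nat.le_of_lt_succ hk]
  refine ⟨mk (coeffRec a F), ⟨by simp [coeffRec], hrec⟩, ?_⟩
  rintro q ⟨hq₀, hq⟩
  ext n
  induction n using Nat.strong_induction_on with
  | _ n ih =>
    rcases n with _ | n
    · simpa [coeffRec] using hq₀
    · rw [hq, hrec, trunc_eq_trunc_of_coeff_eq ih]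

lemma X_pow_dvd_sub_trunc [Ring R] (n : ℕ) (p : R⟦X⟧) :
    X ^ n ∣ p - (trunc n p : R⟦X⟧) :=
  X_pow_dvd_iff.2 fun m hm => by simp [coeff_trunc, hm]

end PowerSeries

theorem IsIdempotentElem.eq_add_mul_add_mul_iff {A : Type*} [Ring A] {e r x : A}
    (he : IsIdempotentElem e) (hx : Commute e x) :
    x = r + e * x + x * e ↔ x = (1 - 2 * e) * r := by
  have hsq : (1 - 2 * e) * (1 - 2 * e) = 1 := by
    have : e * e = e := he
    noncomm_ring [this]
  have hlin : x = r + e * x + x * e ↔ (1 - 2 * e) * x = r := by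
    rw [← hx.eq, sub_mul, one_mul, sub_eq_iff_eq_add, add_assoc, ← two_mul, mul_assoc, add_comm]
  rw [hlin]
  constructor <;> rintro rfl <;> rw [← mul_assoc, hsq, one_mul]

section Deformation

variable {A : Type*} [Ring A]

noncomputable def deformedMul (α : ℕ → A →+ A →+ A) (p q : A⟦X⟧) : A⟦X⟧ :=
  mk fun n => ∑ x ∈ antidiagonal n,
    ∑ y ∈ antidiagonal x.2, α x.1 (coeff y.1 p) (coeff y.2 q)

variable (α : ℕ → A →+ A →+ A)

lemma coeff_deformedMul (p q : A⟦X⟧) (n : ℕ) :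
    coeff n (deformedMul α p q) = ∑ x ∈ antidiagonal n,
      ∑ y ∈ antidiagonal x.2, α x.1 (coeff y.1 p) (coeff y.2 q) :=
  coeff_mk _ _

lemma deformedMul_add_left (p p' q : A⟦X⟧) :
    deformedMul α (p + p') q = deformedMul α p q + deformedMul α p' q := by
  ext n
  simp only [coeff_deformedMul, map_add, AddMonoidHom.add_apply, Finset.sum_add_distrib]

lemma deformedMul_add_right (p q q' : A⟦X⟧) :
    deformedMul α p (q + q') = deformedMul α p q + deformedMul α p q' := by
  ext n
  simp only [coeff_deformedMul, map_add, Finset.sum_add_distrib]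

variable {α} (hα₀ : ∀ a b, α 0 a b = a * b)
include hα₀

lemma coeff_zero_deformedMul (p q : A⟦X⟧) :
    coeff 0 (deformedMul α p q) = constantCoeff p * constantCoeff q := by
  simp [coeff_deformedMul, hα₀]

lemma coeff_succ_deformedMul_of_X_pow_dvd_right {n : ℕ} (p : A⟦X⟧) {q : A⟦X⟧}
    (hq : X ^ (n + 1) ∣ q) :
    coeff (n + 1) (deformedMul α p q) = constantCoeff p * coeff (n + 1) q := by
  have hq' : ∀ k ≤ n, coeff k q = 0 := fun k hk => X_pow_dvd_iff.1 hq k (Nat.lt_succ_of_le hk)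
  rw [coeff_deformedMul, Finset.Nat.sum_antidiagonal_succ, Finset.Nat.sum_antidiagonal_succ,
    Finset.sum_eq_zero, Finset.sum_eq_zero, hα₀, coeff_zero_eq_constantCoeff_apply, add_zero,
    add_zero]
  · intro x hx
    refine Finset.sum_eq_zero fun y hy => ?_
    rw [mem_antidiagonal] at hx hy
    rw [hq' y.2 (by omega), map_zero]
  · intro y hy
    rw [mem_antidiagonal] at hy
    rw [hq' y.2 (by omega), map_zero]

lemma coeff_succ_deformedMul_of_X_pow_dvd_left {n : ℕ} {p : A⟦X⟧} (q : A⟦X⟧)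
    (hp : X ^ (n + 1) ∣ p) :
    coeff (n + 1) (deformedMul α p q) = coeff (n + 1) p * constantCoeff q := by
  have hp' : ∀ k ≤ n, coeff k p = 0 := fun k hk => X_pow_dvd_iff.1 hp k (Nat.lt_succ_of_le hk)
  rw [coeff_deformedMul, Finset.Nat.sum_antidiagonal_succ, Finset.Nat.sum_antidiagonal_succ',
    Finset.sum_eq_zero, Finset.sum_eq_zero, hα₀, coeff_zero_eq_constantCoeff_apply, add_zero,
    add_zero]
  · intro x hx
    refine Finset.sum_eq_zero fun y hy => ?_
    rw [mem_antidiagonal] at hx hy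
    rw [hp' y.1 (by omega), map_zero, AddMonoidHom.zero_apply]
  · intro y hy
    rw [mem_antidiagonal] at hy
    rw [hp' y.1 (by omega), map_zero, AddMonoidHom.zero_apply]

lemma coeff_succ_deformedMul (n : ℕ) (p q : A⟦X⟧) :
    coeff (n + 1) (deformedMul α p q) =
      coeff (n + 1) (deformedMul α (trunc (n + 1) p) (trunc (n + 1) q)) +
        constantCoeff p * coeff (n + 1) q + coeff (n + 1) p * constantCoeff q := by
  have hp : p = trunc (n + 1) p + (p - trunc (n + 1) p) := (add_sub_cancel _ _).symm
  have hq : q = trunc (n + 1) q + (q - trunc (n + 1) q) := (add_sub_cancel _ _).symm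
  conv_lhs => rw [hp, hq]
  rw [deformedMul_add_left, deformedMul_add_right, deformedMul_add_right, map_add, map_add,
    map_add, coeff_succ_deformedMul_of_X_pow_dvd_right hα₀ _ (X_pow_dvd_sub_trunc _ _),
    coeff_succ_deformedMul_of_X_pow_dvd_right hα₀ _ (X_pow_dvd_sub_trunc _ _),
    coeff_succ_deformedMul_of_X_pow_dvd_left hα₀ _ (X_pow_dvd_sub_trunc _ _)]
  simp [coeff_trunc]

theorem deformedMul_self_eq_self_iff {e : A} (he : IsIdempotentElem e)
    (hcentral : ∀ a : A, Commute e a) {p : A⟦X⟧} (hp : constantCoeff p = e) :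
    deformedMul α p p = p ↔ ∀ n, coeff (n + 1) p =
      (1 - 2 * e) * coeff (n + 1) (deformedMul α (trunc (n + 1) p) (trunc (n + 1) p)) := by
  have hcoeff_zero : coeff 0 (deformedMul α p p) = coeff 0 p := by
    rw [coeff_zero_deformedMul hα₀, coeff_zero_eq_constantCoeff_apply, hp, he.eq]
  rw [PowerSeries.ext_iff, ← Nat.and_forall_add_one, iff_true_intro hcoeff_zero, true_and]
  refine forall_congr' fun n => ?_
  rw [coeff_succ_deformedMul hα₀, hp, eq_comm]
  exact he.eq_add_mul_add_mul_iff (hcentral _)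

end Deformation

theorem central_idempotent_lifts_uniquely_in_formal_deformation_general
    {A D : Type*} [Ring A] [Ring D]
    (α : ℕ → A → A → A)
    (hα0 : ∀ a b : A, α 0 a b = a * b)
    (haddl : ∀ (i : ℕ) (a a' b : A), α i (a + a') b = α i a b + α i a' b)
    (haddr : ∀ (i : ℕ) (a b b' : A), α i a (b + b') = α i a b + α i a b')
    (ι : PowerSeries A ≃ D)
    (hmul : ∀ p q : PowerSeries A,
      ι p * ι q = ι (PowerSeries.mk fun n : ℕ =>
        ∑ x ∈ Finset.HasAntidiagonal.antidiagonal n, ∑ y ∈ Finset.HasAntidiagonal.antidiagonal x.2,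
          α x.1 (PowerSeries.coeff y.1 p) (PowerSeries.coeff y.2 q)))
    (e : A) (he : IsIdempotentElem e) (hcentral : ∀ a : A, e * a = a * e) :
    ∃! E : PowerSeries A, IsIdempotentElem (ι E) ∧ PowerSeries.constantCoeff E = e := by
  let β : ℕ → A →+ A →+ A := fun i =>
    AddMonoidHom.mk' (fun a => AddMonoidHom.mk' (α i a) (haddr i a)) fun a a' =>
      AddMonoidHom.ext (haddl i a a')
  have hmul' : ∀ p q, ι p * ι q = ι (deformedMul β p q) := hmul
  let F : ℕ → A[X] → A := fun n P => (1 - 2 * e) * coeff (n + 1) (deformedMul β P P)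
  have hlift : ∀ E : A⟦X⟧, IsIdempotentElem (ι E) ∧ constantCoeff E = e ↔
      constantCoeff E = e ∧ ∀ n, coeff (n + 1) E = F n (trunc (n + 1) E) := fun E => by
    rw [IsIdempotentElem, hmul', ι.apply_eq_iff_eq, and_comm]
    exact and_congr_right (deformedMul_self_eq_self_iff hα0 he hcentral)
  exact (existsUnique_congr hlift).2 (existsUnique_coeff_recursion e F)

/-- Let `A` be an associative unital `k`-algebra and `A_t` a formal
deformation of `A`: the `k[[t]]`-module `A[[t]]` (encoded as a ring `D` identified with
`PowerSeries A` via the bijection `ι`) with multiplication determined by `k`-bilinear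
maps `αᵢ : A × A → A` (with `α₀` the multiplication of `A`) via the formula that the
`tᵏ`-coefficient of the product of `Σ aₙtⁿ` and `Σ bₚtᵖ` is `Σ_{m+n+p=k} α_m(aₙ, bₚ)`;
the unit is the constant power series `1`.  If `e` is a central idempotent of `A`, then
there exists a unique idempotent of `A_t` with constant term `e`. -/
theorem central_idempotent_lifts_uniquely_in_formal_deformation
    {k A D : Type*} [CommRing k] [Ring A] [Algebra k A] [Ring D]
    (α : ℕ → A → A → A)
    (hα0 : ∀ a b : A, α 0 a b = a * b)
    (haddl : ∀ (i : ℕ) (a a' b : A), α i (a + a') b = α i a b + α i a' b)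
    (haddr : ∀ (i : ℕ) (a b b' : A), α i a (b + b') = α i a b + α i a b')
    (hsmull : ∀ (i : ℕ) (c : k) (a b : A), α i (c • a) b = c • α i a b)
    (hsmulr : ∀ (i : ℕ) (c : k) (a b : A), α i a (c • b) = c • α i a b)
    (ι : PowerSeries A ≃ D)
    (hadd : ∀ p q : PowerSeries A, ι (p + q) = ι p + ι q)
    (hmul : ∀ p q : PowerSeries A,
      ι p * ι q = ι (PowerSeries.mk fun n : ℕ =>
        ∑ x ∈ Finset.HasAntidiagonal.antidiagonal n, ∑ y ∈ Finset.HasAntidiagonal.antidiagonal x.2,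
          α x.1 (PowerSeries.coeff y.1 p) (PowerSeries.coeff y.2 q)))
    (hone : ι 1 = 1)
    (e : A) (he : IsIdempotentElem e) (hcentral : ∀ a : A, e * a = a * e) :
    ∃! E : PowerSeries A, IsIdempotentElem (ι E) ∧ PowerSeries.constantCoeff E = e :=
  central_idempotent_lifts_uniquely_in_formal_deformation_general α hα0 haddl haddr ι hmul e he
    hcentral
end

section
/- Let A be an associative unital ring and I a two-sided ideal of A with I ⊆ J(A), the Jacobson radical of A. Then A is clean if and only if A/I is clean and every idempotent of A/I lifts to an idempotent of A. -/
/-- The Jacobson radical of a (possibly noncommutative) ring `R`: the intersection of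
all maximal right ideals of `R` (right ideals of `R` are encoded as left ideals of the
opposite ring `Rᵐᵒᵖ`). -/
def jacobsonRadical (R : Type*) [Ring R] : Set R :=
  {x : R | ∀ I : Ideal Rᵐᵒᵖ, I.IsMaximal → MulOpposite.op x ∈ I}

/-- Elements in every maximal left ideal have a "one plus" with a left inverse. -/
private lemma left_inv_of_mem_all {R : Type*} [Ring R] (y : R)
    (hy : ∀ m : Ideal R, m.IsMaximal → y ∈ m) : ∃ z : R, z * (1 + y) = 1 := by
  by_contra h
  push_neg at h
  have hne : Ideal.span ({1 + y} : Set R) ≠ ⊤ := by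
    rw [Ideal.ne_top_iff_one]
    intro h1
    obtain ⟨z, hz⟩ := Ideal.mem_span_singleton'.mp h1
    exact h z hz
  obtain ⟨m, hm, hle⟩ := Ideal.exists_le_maximal _ hne
  have h1 : (1 : R) + y ∈ m := hle (Ideal.subset_span rfl)
  have h2 : y ∈ m := hy m hm
  have : (1 : R) ∈ m := by simpa using m.sub_mem h1 h2
  exact hm.ne_top (Ideal.eq_top_of_isUnit_mem m this isUnit_one)

/-- One plus an element in every maximal left ideal is a unit. -/
private lemma isUnit_one_add_of_mem_all {R : Type*} [Ring R] (y : R)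
    (hy : ∀ m : Ideal R, m.IsMaximal → y ∈ m) : IsUnit (1 + y) := by
  obtain ⟨z, hz⟩ := left_inv_of_mem_all y hy
  have hz' : z = 1 + -(z * y) := by
    have h : z + z * y = 1 := by rw [← hz]; noncomm_ring
    rw [← h]; abel
  obtain ⟨w, hw⟩ := left_inv_of_mem_all (-(z * y)) (fun m hm => m.neg_mem (m.mul_mem_left z (hy m hm)))
  rw [← hz'] at hw
  -- w * z = 1 and z * (1+y) = 1, hence w = 1 + y and z is a two-sided inverse
  have hwz : w = 1 + y := by
    calc w = w * (z * (1 + y)) := by rw [hz, mul_one]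
    _ = (w * z) * (1 + y) := by noncomm_ring
    _ = 1 + y := by rw [hw, one_mul]
  rw [hwz] at hw
  exact ⟨⟨1 + y, z, hw, hz⟩, rfl⟩

private lemma isUnit_one_add_jac {A : Type*} [Ring A] (x : A)
    (hx : x ∈ jacobsonRadical A) : IsUnit (1 + x) := by
  have : IsUnit (1 + MulOpposite.op x) :=
    isUnit_one_add_of_mem_all (MulOpposite.op x) (fun m hm => hx m hm)
  rw [show (1 : Aᵐᵒᵖ) + MulOpposite.op x = MulOpposite.op (1 + x) by simp] at this
  exact isUnit_op.mp this

/-- If `x * b` and `b * x` are both units, then `x` is a unit. -/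
private lemma isUnit_of_both {R : Type*} [Ring R] {x b : R}
    (h1 : IsUnit (x * b)) (h2 : IsUnit (b * x)) : IsUnit x := by
  obtain ⟨u, hu⟩ := h1
  obtain ⟨v, hv⟩ := h2
  have hright : x * (b * ↑u⁻¹) = 1 := by
    rw [← mul_assoc, ← hu, Units.mul_inv]
  have hleft : (↑v⁻¹ * b) * x = 1 := by
    rw [mul_assoc, ← hv, Units.inv_mul]
  have heq : (↑v⁻¹ * b : R) = b * ↑u⁻¹ := by
    calc (↑v⁻¹ * b : R) = (↑v⁻¹ * b) * (x * (b * ↑u⁻¹)) := by rw [hright, mul_one]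
    _ = ((↑v⁻¹ * b) * x) * (b * ↑u⁻¹) := by noncomm_ring
    _ = b * ↑u⁻¹ := by rw [hleft, one_mul]
  exact ⟨⟨x, b * ↑u⁻¹, hright, by rw [← heq]; exact hleft⟩, rfl⟩

/-- Let `A` be an associative unital ring and `I` a two-sided ideal of `A`
with `I ⊆ J(A)`, the Jacobson radical of `A`.  Then `A` is clean if and only if `A/I` is
clean and every idempotent of `A/I` lifts to an idempotent of `A`.  (The quotient ring
`A/I` is realized as the quotient by the ring congruence attached to the two-sided ideal
`I`, and `I.ringCon.mk'` is the quotient map.) -/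
theorem clean_iff_quotient_clean_and_idempotents_lift
    {A : Type*} [Ring A] (I : TwoSidedIdeal A)
    (hIJ : ∀ x ∈ I, x ∈ jacobsonRadical A) :
    IsCleanRing A ↔
      (IsCleanRing I.ringCon.Quotient ∧
        ∀ ebar : I.ringCon.Quotient, IsIdempotentElem ebar →
          ∃ e : A, IsIdempotentElem e ∧ I.ringCon.mk' e = ebar) := by
  have hsurj : Function.Surjective I.ringCon.mk' := fun q =>
    Quotient.inductionOn' q (fun a => ⟨a, rfl⟩)
  have hmk : ∀ x y : A, I.ringCon.mk' x = I.ringCon.mk' y ↔ x - y ∈ I := by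
    intro x y
    rw [show (I.ringCon.mk' x = I.ringCon.mk' y) ↔ I.ringCon x y from Quotient.eq'',
      I.rel_iff]
  constructor
  · intro hA
    constructor
    · -- quotient is clean
      intro q
      obtain ⟨a, rfl⟩ := hsurj q
      obtain ⟨e, u, he, hu, hau⟩ := hA a
      exact ⟨I.ringCon.mk' e, I.ringCon.mk' u,
        by rw [IsIdempotentElem, ← map_mul, he],
        hu.map I.ringCon.mk', by rw [hau, map_add]⟩
    · -- idempotents lift
      intro ebar hebar
      obtain ⟨a, rfl⟩ := hsurj ebar
      obtain ⟨e, u, he, hu, hau⟩ := hA a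
      obtain ⟨v, hv⟩ := hu
      -- a - a² ∈ I
      have haI : a - a * a ∈ I := by
        rw [← hmk, map_mul, hebar]
      -- f = v⁻¹ (1 - e) v is an idempotent congruent to a mod I
      refine ⟨(↑v⁻¹ : A) * (1 - e) * ↑v, ?_, ?_⟩
      · have h1e : IsIdempotentElem (1 - e) := he.one_sub
        show ((↑v⁻¹ : A) * (1 - e) * ↑v) * ((↑v⁻¹ : A) * (1 - e) * ↑v)
            = (↑v⁻¹ : A) * (1 - e) * ↑v
        calc ((↑v⁻¹ : A) * (1 - e) * ↑v) * ((↑v⁻¹ : A) * (1 - e) * ↑v)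
            = (↑v⁻¹ : A) * (1 - e) * (↑v * ↑v⁻¹) * (1 - e) * ↑v := by noncomm_ring
          _ = (↑v⁻¹ : A) * ((1 - e) * (1 - e)) * ↑v := by rw [Units.mul_inv]; noncomm_ring
          _ = (↑v⁻¹ : A) * (1 - e) * ↑v := by rw [h1e]
      · rw [hmk]
        -- key computation: (1-e)u - u a = a - a² with u = v, a = e + u
        have key : (1 - e) * ↑v - ↑v * a = a - a * a := by
          rw [hau, hv]
          have hx : e + u - (e + u) * (e + u)
              = (e - e * e) + ((1 - e) * u - u * (e + u)) := by noncomm_ring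
          rw [hx, he]
          abel
        have hmem : (1 - e) * ↑v - ↑v * a ∈ I := key ▸ haI
        have hmem2 : (↑v⁻¹ : A) * ((1 - e) * ↑v - ↑v * a) ∈ I := I.mul_mem_left _ _ hmem
        have : (↑v⁻¹ : A) * ((1 - e) * ↑v) - a ∈ I := by
          have : (↑v⁻¹ : A) * ((1 - e) * ↑v - ↑v * a)
              = (↑v⁻¹ : A) * ((1 - e) * ↑v) - (↑v⁻¹ * ↑v) * a := by noncomm_ring
          rw [this, Units.inv_mul, one_mul] at hmem2
          exact hmem2
        have heq : (↑v⁻¹ : A) * (1 - e) * ↑v = (↑v⁻¹ : A) * ((1 - e) * ↑v) := by noncomm_ring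
        rw [heq]
        exact this
  · rintro ⟨hQ, hlift⟩ a
    obtain ⟨ebar, ubar, hebar, hubar, habar⟩ := hQ (I.ringCon.mk' a)
    obtain ⟨e, he, hemk⟩ := hlift ebar hebar
    refine ⟨e, a - e, he, ?_, by abel⟩
    -- a - e maps to ubar, a unit in the quotient; lift the unit
    have hmap : I.ringCon.mk' (a - e) = ubar := by
      rw [map_sub, hemk, habar]; noncomm_ring
    obtain ⟨w, hw⟩ := hubar
    obtain ⟨b, hb⟩ := hsurj (↑w⁻¹ : I.ringCon.Quotient)
    -- (a-e)*b - 1 ∈ I and b*(a-e) - 1 ∈ I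
    have h1 : (a - e) * b - 1 ∈ I := by
      rw [← hmk, map_mul, hmap, hb, ← hw, Units.mul_inv, map_one]
    have h2 : b * (a - e) - 1 ∈ I := by
      rw [← hmk, map_mul, hmap, hb, ← hw, Units.inv_mul, map_one]
    have hu1 : IsUnit ((a - e) * b) := by
      have := isUnit_one_add_jac _ (hIJ _ h1)
      simpa using this
    have hu2 : IsUnit (b * (a - e)) := by
      have := isUnit_one_add_jac _ (hIJ _ h2)
      simpa using this
    exact isUnit_of_both hu1 hu2
end

section
/- Let A be an associative unital k-algebra and A_t a deformation of A, i.e. an associative unital k[[t]]-algebra that is t-torsion free and complete and separated in the t-adic topology, with A_t/(tA_t) isomorphic to A as k-algebras. Then A is clean if and only if A_t is clean. -/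
/-- Let `R = A_t` be a deformation of the associative unital `k`-algebra
`A` (as in Statement 10: an associative unital `k[[t]]`-algebra, `t`-torsion free,
complete and separated in the `t`-adic topology, with `A_t/(tA_t) ≅ A` as `k`-algebras,
encoded by a surjective `k`-algebra homomorphism `π` with kernel `tA_t`).
Then `A` is clean if and only if `A_t` is clean. -/
theorem clean_iff_of_deformation
    {k A R : Type*} [CommRing k] [Ring A] [Algebra k A]
    [Ring R] [Algebra k R] [Algebra (PowerSeries k) R]
    [IsScalarTower k (PowerSeries k) R]
    (T : R) (hT : T = algebraMap (PowerSeries k) R PowerSeries.X)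
    (htf : ∀ x : R, T * x = 0 → x = 0)
    (hsep : ∀ x : R, (∀ n : ℕ, ∃ y : R, x = T ^ n * y) → x = 0)
    (hcomplete : ∀ s : ℕ → R, (∀ n : ℕ, ∃ y : R, s (n + 1) - s n = T ^ n * y) →
      ∃ L : R, ∀ n : ℕ, ∃ y : R, L - s n = T ^ n * y)
    (π : R →ₐ[k] A) (hsurj : Function.Surjective π)
    (hker : ∀ x : R, π x = 0 ↔ ∃ y : R, x = T * y) :
    IsCleanRing A ↔ IsCleanRing R := by
  -- T is central
  have hc : ∀ x : R, T * x = x * T := fun x => by rw [hT]; exact Algebra.commutes _ _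
  have hcp : ∀ (n : ℕ) (x : R), T ^ n * x = x * T ^ n := fun n x =>
    Commute.pow_left (hc x) n
  -- divisibility helpers, where `T ^ n ∣ x` is definitionally `∃ y, x = T ^ n * y`
  have hDl : ∀ (n : ℕ) (a b : R), T ^ n ∣ a → T ^ n ∣ a * b := by
    rintro n a b ⟨c, rfl⟩; exact ⟨c * b, by rw [mul_assoc]⟩
  have hDr : ∀ (n : ℕ) (a b : R), T ^ n ∣ a → T ^ n ∣ b * a := by
    rintro n a b ⟨c, rfl⟩; exact ⟨b * c, by rw [← mul_assoc, ← hcp n b, mul_assoc]⟩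
  have hDmul : ∀ (m n : ℕ) (a b : R), T ^ m ∣ a → T ^ n ∣ b → T ^ (m + n) ∣ a * b := by
    rintro m n a b ⟨c, rfl⟩ ⟨d, rfl⟩
    refine ⟨c * d, ?_⟩
    have hcd : c * (T ^ n * d) = T ^ n * (c * d) := by
      rw [← mul_assoc, ← hcp n c, mul_assoc]
    rw [pow_add, mul_assoc, hcd, ← mul_assoc]
  have hDmono : ∀ (m n : ℕ) (a : R), m ≤ n → T ^ n ∣ a → T ^ m ∣ a := fun m n a h hd =>
    dvd_trans (pow_dvd_pow T h) hd
  -- geometric series: 1 - T*z is a unit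
  have hgeom : ∀ z : R, IsUnit (1 - T * z) := by
    intro z
    set w := T * z with hw
    have hwn : ∀ n : ℕ, w ^ n = T ^ n * z ^ n := fun n => Commute.mul_pow (hc z) n
    obtain ⟨L, hL⟩ := hcomplete (fun n => ∑ i ∈ Finset.range n, w ^ i) (by
      intro n
      refine ⟨z ^ n, ?_⟩
      simp only [Finset.sum_range_succ, add_sub_cancel_left]
      exact hwn n)
    have hsl : ∀ n : ℕ, (1 - w) * (∑ i ∈ Finset.range n, w ^ i) = 1 - w ^ n := by
      intro n
      induction n with
      | zero => simp
      | succ m ih => rw [Finset.sum_range_succ, mul_add, ih, pow_succ']; noncomm_ring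
    have hsr : ∀ n : ℕ, (∑ i ∈ Finset.range n, w ^ i) * (1 - w) = 1 - w ^ n := by
      intro n
      induction n with
      | zero => simp
      | succ m ih => rw [Finset.sum_range_succ, add_mul, ih, pow_succ]; noncomm_ring
    have h1 : (1 - w) * L = 1 := by
      rw [← sub_eq_zero]
      apply hsep
      intro n
      obtain ⟨y, hy⟩ := hL n
      have hLe : L = T ^ n * y + (∑ i ∈ Finset.range n, w ^ i) := by
        rw [← hy]; abel
      refine ⟨(1 - w) * y - z ^ n, ?_⟩
      have h2 : (1 - w) * (T ^ n * y) = T ^ n * ((1 - w) * y) := by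
        rw [← mul_assoc, ← hcp n (1 - w), mul_assoc]
      rw [hLe, mul_add, hsl n, h2, hwn n, mul_sub]
      noncomm_ring
    have h2 : L * (1 - w) = 1 := by
      rw [← sub_eq_zero]
      apply hsep
      intro n
      obtain ⟨y, hy⟩ := hL n
      have hLe : L = T ^ n * y + (∑ i ∈ Finset.range n, w ^ i) := by
        rw [← hy]; abel
      refine ⟨y * (1 - w) - z ^ n, ?_⟩
      rw [hLe, add_mul, hsr n, mul_assoc, hwn n, mul_sub]
      noncomm_ring
    exact ⟨⟨1 - w, L, h1, h2⟩, rfl⟩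
  -- lifting units
  have hlift : ∀ x : R, IsUnit (π x) → IsUnit x := by
    intro x hx
    obtain ⟨y, hy⟩ := hsurj (↑hx.unit⁻¹)
    have hmi : π x * ↑hx.unit⁻¹ = 1 := hx.mul_val_inv
    have him : (↑hx.unit⁻¹ : A) * π x = 1 := hx.val_inv_mul
    have hxy : π (x * y - 1) = 0 := by
      rw [map_sub, map_mul, hy, map_one, hmi, sub_self]
    have hyx : π (y * x - 1) = 0 := by
      rw [map_sub, map_mul, hy, map_one, him, sub_self]
    obtain ⟨z, hz⟩ := (hker _).mp hxy
    obtain ⟨w, hw⟩ := (hker _).mp hyx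
    have hxyu : IsUnit (x * y) := by
      have : x * y = 1 - T * (-z) := by rw [mul_neg, ← hz]; abel
      rw [this]; exact hgeom (-z)
    have hyxu : IsUnit (y * x) := by
      have : y * x = 1 - T * (-w) := by rw [mul_neg, ← hw]; abel
      rw [this]; exact hgeom (-w)
    obtain ⟨u, hu⟩ := hxyu
    obtain ⟨v, hv⟩ := hyxu
    have hright : x * (y * ↑u⁻¹) = 1 := by
      rw [← mul_assoc, ← hu]; exact u.mul_inv
    have hleft : (↑v⁻¹ * y) * x = 1 := by
      rw [mul_assoc, ← hv]; exact v.inv_mul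
    have hbc : (↑v⁻¹ * y : R) = y * ↑u⁻¹ := by
      calc (↑v⁻¹ * y : R) = (↑v⁻¹ * y) * (x * (y * ↑u⁻¹)) := by rw [hright, mul_one]
        _ = ((↑v⁻¹ * y) * x) * (y * ↑u⁻¹) := by noncomm_ring
        _ = y * ↑u⁻¹ := by rw [hleft, one_mul]
    exact ⟨⟨x, y * ↑u⁻¹, hright, by rw [← hbc]; exact hleft⟩, rfl⟩
  -- lifting idempotents
  have hilift : ∀ e : A, IsIdempotentElem e → ∃ E : R, IsIdempotentElem E ∧ π E = e := by
    intro e he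
    have he2 : e ^ 2 = e := by rw [sq]; exact he
    have he3 : e ^ 3 = e := by rw [pow_succ, he2]; exact he
    obtain ⟨x0, hx0⟩ := hsurj e
    set f : R → R := fun x => 3 * x ^ 2 - 2 * x ^ 3 with hf
    set x : ℕ → R := fun n => f^[n] x0 with hxdef
    have hx_succ : ∀ n, x (n + 1) = 3 * (x n) ^ 2 - 2 * (x n) ^ 3 := fun n => by
      rw [hxdef]; exact Function.iterate_succ_apply' f n x0
    have hπ : ∀ n, π (x n) = e := by
      intro n
      induction n with
      | zero => exact hx0
      | succ m ih =>
        rw [hx_succ]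
        simp only [map_sub, map_mul, map_pow, map_ofNat, ih, he2, he3]
        noncomm_ring
    have hd : ∀ n, T ^ (n + 1) ∣ ((x n) ^ 2 - x n) := by
      intro n
      induction n with
      | zero =>
        obtain ⟨y, hy⟩ := (hker ((x 0) ^ 2 - x 0)).mp (by
          rw [map_sub, map_pow, hπ 0, he2, sub_self])
        exact ⟨y, by rw [pow_one]; exact hy⟩
      | succ m ih =>
        have key : (x (m+1)) ^ 2 - x (m+1) =
            ((x m) ^ 2 - x m) ^ 2 * (4 * ((x m) ^ 2 - x m) - 3) := by
          rw [hx_succ]; noncomm_ring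
        rw [key]
        have h1 : T ^ ((m+1)+(m+1)) ∣ ((x m) ^ 2 - x m) ^ 2 := by
          rw [sq]; exact hDmul _ _ _ _ ih ih
        exact hDmono _ _ _ (by omega) (hDl _ _ _ h1)
    have hdiff : ∀ n, ∃ y, x (n + 1) - x n = T ^ n * y := by
      intro n
      have key : x (n + 1) - x n = ((x n) ^ 2 - x n) * (1 - 2 * x n) := by
        rw [hx_succ]; noncomm_ring
      have : T ^ (n + 1) ∣ (x (n + 1) - x n) := by
        rw [key]; exact hDl _ _ _ (hd n)
      exact hDmono _ _ _ (by omega) this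
    obtain ⟨L, hL⟩ := hcomplete x hdiff
    refine ⟨L, ?_, ?_⟩
    · rw [IsIdempotentElem, ← sub_eq_zero]
      apply hsep
      intro n
      obtain ⟨y, hy⟩ := hL n
      have hLe : L = T ^ n * y + x n := by rw [← hy]; abel
      have hsplit : L * L - L = ((x n) ^ 2 - x n) +
          ((x n) * (T ^ n * y) + (T ^ n * y) * (x n) + (T ^ n * y) * (T ^ n * y)
            - T ^ n * y) := by
        rw [hLe]; noncomm_ring
      have hTn : T ^ n ∣ (T ^ n * y) := ⟨y, rfl⟩
      have : T ^ n ∣ (L * L - L) := by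
        rw [hsplit]
        exact dvd_add (hDmono _ _ _ (by omega) (hd n))
          (dvd_sub (dvd_add (dvd_add (hDr _ _ _ hTn) (hDl _ _ _ hTn))
            (hDl _ _ _ hTn)) hTn)
      exact this
    · obtain ⟨y, hy⟩ := hL 1
      have : π (L - x 1) = 0 := (hker _).mpr ⟨y, by rw [← pow_one T]; exact hy⟩
      have hLx : π L = π (x 1) := by
        rw [map_sub, sub_eq_zero] at this; exact this
      rw [hLx, hπ 1]
  constructor
  · intro hA r
    obtain ⟨e, u, he, hu, heq⟩ := hA (π r)
    obtain ⟨E, hE, hEe⟩ := hilift e he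
    have hru : IsUnit (r - E) := by
      apply hlift
      rw [map_sub, hEe, heq, add_sub_cancel_left]
      exact hu
    exact ⟨E, r - E, hE, hru, by abel⟩
  · intro hR a
    obtain ⟨r, hr⟩ := hsurj a
    obtain ⟨e, u, he, hu, heq⟩ := hR r
    refine ⟨π e, π u, ?_, hu.map π, ?_⟩
    · rw [IsIdempotentElem, ← map_mul, he]
    · rw [← hr, heq, map_add]
end

section
/- Let A be an associative unital k-algebra and A_t a deformation of A, i.e. an associative unital k[[t]]-algebra that is t-torsion free and complete and separated in the t-adic topology, with A_t/(tA_t) isomorphic to A as k-algebras. Then A is an exchange ring if and only if A_t is an exchange ring. -/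
section Aux

variable {R : Type*} [Ring R] {T : R}

private lemma pow_comm_all (hc : ∀ x : R, T * x = x * T) :
    ∀ (n : ℕ) (x : R), T ^ n * x = x * T ^ n := by
  intro n
  induction n with
  | zero => simp
  | succ n ih =>
    intro x
    rw [pow_succ, mul_assoc, hc x, ← mul_assoc, ih x, mul_assoc]

private lemma mulT (hc : ∀ x : R, T * x = x * T) (n : ℕ) (u v : R) :
    u * (T ^ n * v) = T ^ n * (u * v) := by
  rw [← mul_assoc, ← pow_comm_all hc n u, mul_assoc]

/-- Geometric series: `1 - T*z` is a unit in a `T`-adically complete separated ring. -/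
private lemma geom_inv (hc : ∀ x : R, T * x = x * T)
    (hsep : ∀ x : R, (∀ n : ℕ, ∃ y : R, x = T ^ n * y) → x = 0)
    (hcomplete : ∀ s : ℕ → R, (∀ n : ℕ, ∃ y : R, s (n + 1) - s n = T ^ n * y) →
      ∃ L : R, ∀ n : ℕ, ∃ y : R, L - s n = T ^ n * y)
    (z : R) : ∃ L : R, (1 - T * z) * L = 1 ∧ L * (1 - T * z) = 1 := by
  set x : R := T * z with hxdef
  have hxpow : ∀ n : ℕ, x ^ n = T ^ n * z ^ n := fun n => Commute.mul_pow (hc z) n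
  set s : ℕ → R := fun n => ∑ i ∈ Finset.range n, x ^ i with hsdef
  have hstep : ∀ n : ℕ, ∃ y : R, s (n + 1) - s n = T ^ n * y := by
    intro n
    refine ⟨z ^ n, ?_⟩
    have h : s (n + 1) = s n + x ^ n := Finset.sum_range_succ _ n
    rw [h, add_sub_cancel_left, hxpow]
  obtain ⟨L, hL⟩ := hcomplete s hstep
  have hgeom : ∀ n : ℕ, s n * (1 - x) = 1 - x ^ n := by
    intro n
    have h := geom_sum_mul x n
    have h2 : ∀ a b : R, a * (1 - b) = -(a * (b - 1)) := by
      intro a b; noncomm_ring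
    rw [h2, h, neg_sub]
  have hgeom' : ∀ n : ℕ, (1 - x) * s n = 1 - x ^ n := by
    intro n
    have hcom : Commute (1 - x) (s n) := by
      refine Commute.sub_left (Commute.one_left _) ?_
      exact Commute.sum_right (Finset.range n) (fun i => x ^ i) x
        (fun i _ => (Commute.refl x).pow_right i)
    rw [hcom.eq, hgeom]
  have fin : ∀ c u v : R, 1 - c * u + c * v - 1 = c * (v - u) := by
    intro c u v; noncomm_ring
  refine ⟨L, ?_, ?_⟩
  · have key : (1 - x) * L - 1 = 0 := by
      apply hsep
      intro n
      obtain ⟨w, hw⟩ := hL n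
      refine ⟨(1 - x) * w - z ^ n, ?_⟩
      have hLw : L = s n + T ^ n * w := by rw [← hw]; abel
      rw [hLw, mul_add, hgeom' n, mulT hc n (1 - x) w, hxpow n]
      exact fin _ _ _
    exact sub_eq_zero.mp key
  · have key : L * (1 - x) - 1 = 0 := by
      apply hsep
      intro n
      obtain ⟨w, hw⟩ := hL n
      refine ⟨w * (1 - x) - z ^ n, ?_⟩
      have hLw : L = s n + T ^ n * w := by rw [← hw]; abel
      rw [hLw, add_mul, hgeom n, mul_assoc, hxpow n]
      exact fin _ _ _
    exact sub_eq_zero.mp key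

/-- Idempotent lifting modulo `T*R` by Newton iteration `e ↦ 3e² - 2e³`. -/
private lemma idem_lift (hc : ∀ x : R, T * x = x * T)
    (hsep : ∀ x : R, (∀ n : ℕ, ∃ y : R, x = T ^ n * y) → x = 0)
    (hcomplete : ∀ s : ℕ → R, (∀ n : ℕ, ∃ y : R, s (n + 1) - s n = T ^ n * y) →
      ∃ L : R, ∀ n : ℕ, ∃ y : R, L - s n = T ^ n * y)
    (g₀ : R) (hg : ∃ y : R, g₀ * g₀ - g₀ = T * y) :
    ∃ g : R, IsIdempotentElem g ∧ ∃ y : R, g - g₀ = T * y := by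
  set e : ℕ → R := fun n => Nat.rec g₀ (fun _ p => 3 * p ^ 2 - 2 * p ^ 3) n with hedef
  have he0 : e 0 = g₀ := rfl
  have hesucc : ∀ n, e (n + 1) = 3 * (e n) ^ 2 - 2 * (e n) ^ 3 := fun n => rfl
  -- the defect e n * e n - e n lies in T^(n+1) R
  have hz : ∀ n : ℕ, ∃ w : R, e n * e n - e n = T ^ (n + 1) * w := by
    intro n
    induction n with
    | zero =>
      obtain ⟨y, hy⟩ := hg
      exact ⟨y, by rw [he0, hy, pow_one]⟩
    | succ n ih =>
      obtain ⟨w, hw⟩ := ih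
      refine ⟨-(T ^ n * (w * w * ((3 - 2 * e n) * (2 * e n + 1)))), ?_⟩
      have hid : (3 * (e n) ^ 2 - 2 * (e n) ^ 3) * (3 * (e n) ^ 2 - 2 * (e n) ^ 3)
          - (3 * (e n) ^ 2 - 2 * (e n) ^ 3)
          = -((e n * e n - e n) * (e n * e n - e n) * ((3 - 2 * e n) * (2 * e n + 1))) := by
        noncomm_ring
      have key : T ^ (n + 1) * w * (T ^ (n + 1) * w) = T ^ (n + 2) * (T ^ n * (w * w)) := by
        calc T ^ (n + 1) * w * (T ^ (n + 1) * w)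
            = T ^ (n + 1) * (w * (T ^ (n + 1) * w)) := mul_assoc _ _ _
          _ = T ^ (n + 1) * (T ^ (n + 1) * (w * w)) := by rw [mulT hc (n + 1) w w]
          _ = T ^ (n + 1) * T ^ (n + 1) * (w * w) := (mul_assoc _ _ _).symm
          _ = T ^ (n + 1 + (n + 1)) * (w * w) := by rw [← pow_add]
          _ = T ^ (n + 2) * T ^ n * (w * w) := by
              rw [show n + 1 + (n + 1) = n + 2 + n from by omega, pow_add]
          _ = T ^ (n + 2) * (T ^ n * (w * w)) := mul_assoc _ _ _
      have key2 : T ^ (n + 1) * w * (T ^ (n + 1) * w) * ((3 - 2 * e n) * (2 * e n + 1))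
          = T ^ (n + 2) * (T ^ n * (w * w * ((3 - 2 * e n) * (2 * e n + 1)))) := by
        calc T ^ (n + 1) * w * (T ^ (n + 1) * w) * ((3 - 2 * e n) * (2 * e n + 1))
            = T ^ (n + 2) * (T ^ n * (w * w)) * ((3 - 2 * e n) * (2 * e n + 1)) := by
              rw [key]
          _ = T ^ (n + 2) * (T ^ n * (w * w) * ((3 - 2 * e n) * (2 * e n + 1))) :=
              mul_assoc _ _ _
          _ = T ^ (n + 2) * (T ^ n * (w * w * ((3 - 2 * e n) * (2 * e n + 1)))) := by
              rw [mul_assoc (T ^ n) (w * w) _]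
      rw [hesucc, hid, hw, key2, ← mul_neg]
  -- successive differences
  have hd : ∀ n : ℕ, ∃ w : R, e (n + 1) - e n = T ^ (n + 1) * w := by
    intro n
    obtain ⟨w, hw⟩ := hz n
    refine ⟨-((2 * e n - 1) * w), ?_⟩
    have hid : (3 * (e n) ^ 2 - 2 * (e n) ^ 3) - e n
        = -((2 * e n - 1) * (e n * e n - e n)) := by noncomm_ring
    rw [hesucc, hid, hw, mulT hc (n + 1) (2 * e n - 1) w, ← mul_neg]
  obtain ⟨L, hL⟩ := hcomplete e (by
    intro n
    obtain ⟨w, hw⟩ := hd n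
    exact ⟨T * w, by rw [hw, pow_succ, mul_assoc]⟩)
  refine ⟨L, ?_, ?_⟩
  · -- L is idempotent
    have key : L * L - L = 0 := by
      apply hsep
      intro n
      obtain ⟨d, hdn⟩ := hL n
      obtain ⟨w, hw⟩ := hz n
      refine ⟨T * w + e n * d + d * e n + d * (T ^ n * d) - d, ?_⟩
      have hLe : L = e n + T ^ n * d := by rw [← hdn]; abel
      have h1 : e n * (T ^ n * d) = T ^ n * (e n * d) := mulT hc n (e n) d
      have h3 : e n * e n - e n = T ^ n * (T * w) := by
        rw [hw, pow_succ, mul_assoc]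
      calc L * L - L
          = (e n * e n - e n) + e n * (T ^ n * d) + T ^ n * d * e n
            + T ^ n * d * (T ^ n * d) - T ^ n * d := by rw [hLe]; noncomm_ring
        _ = T ^ n * (T * w) + T ^ n * (e n * d) + T ^ n * (d * e n)
            + T ^ n * (d * (T ^ n * d)) - T ^ n * d := by
            rw [h3, h1, mul_assoc (T ^ n) d (e n), mul_assoc (T ^ n) d (T ^ n * d)]
        _ = T ^ n * (T * w + e n * d + d * e n + d * (T ^ n * d) - d) := by
            rw [mul_sub, mul_add, mul_add, mul_add]
    exact sub_eq_zero.mp key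
  · -- L - g₀ ∈ T R
    obtain ⟨d, hd1⟩ := hL 1
    obtain ⟨w, hw0⟩ := hd 0
    have hw' : e 1 - g₀ = T * w := by
      have : e (0 + 1) - e 0 = T ^ (0 + 1) * w := hw0
      simpa [he0] using this
    refine ⟨d + w, ?_⟩
    have hsplit : L - g₀ = (L - e 1) + (e 1 - g₀) := by abel
    rw [hsplit, hd1, hw', pow_one, ← mul_add]

end Aux

/-- Let `R = A_t` be a deformation of the associative unital `k`-algebra
`A` (as in Statement 10: an associative unital `k[[t]]`-algebra, `t`-torsion free,
complete and separated in the `t`-adic topology, with `A_t/(tA_t) ≅ A` as `k`-algebras,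
encoded by a surjective `k`-algebra homomorphism `π` with kernel `tA_t`).
Then `A` is an exchange ring if and only if `A_t` is an exchange ring. -/
theorem exchange_iff_of_deformation
    {k A R : Type*} [CommRing k] [Ring A] [Algebra k A]
    [Ring R] [Algebra k R] [Algebra (PowerSeries k) R]
    [IsScalarTower k (PowerSeries k) R]
    (T : R) (hT : T = algebraMap (PowerSeries k) R PowerSeries.X)
    (htf : ∀ x : R, T * x = 0 → x = 0)
    (hsep : ∀ x : R, (∀ n : ℕ, ∃ y : R, x = T ^ n * y) → x = 0)
    (hcomplete : ∀ s : ℕ → R, (∀ n : ℕ, ∃ y : R, s (n + 1) - s n = T ^ n * y) →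
      ∃ L : R, ∀ n : ℕ, ∃ y : R, L - s n = T ^ n * y)
    (π : R →ₐ[k] A) (hsurj : Function.Surjective π)
    (hker : ∀ x : R, π x = 0 ↔ ∃ y : R, x = T * y) :
    IsExchangeRing A ↔ IsExchangeRing R := by
  have hc : ∀ x : R, T * x = x * T := by
    intro x; rw [hT]; exact Algebra.commutes _ x
  constructor
  · -- A exchange → R exchange
    intro hA a
    obtain ⟨ebar, hebar, ⟨xbar, hxbar⟩, ⟨ybar, hybar⟩⟩ := hA (π a)
    obtain ⟨x, hx⟩ := hsurj xbar
    obtain ⟨y, hy⟩ := hsurj ybar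
    -- lift the idempotent: g₀ = a * x
    have hg0 : ∃ w : R, (a * x) * (a * x) - (a * x) = T * w := by
      rw [← hker]
      have h : π (a * x) = ebar := by rw [map_mul, hx, hxbar]
      rw [map_sub, map_mul, h, hebar, sub_self]
    obtain ⟨g, hgidem, w₁, hw₁⟩ := idem_lift hc hsep hcomplete (a * x) hg0
    have hπg : π g = ebar := by
      have h : π (g - a * x) = 0 := (hker _).mpr ⟨w₁, hw₁⟩
      rw [map_sub, sub_eq_zero] at h
      rw [h, map_mul, hx, hxbar]
    -- f = 1 - g
    set f : R := 1 - g with hfdef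
    have hfidem : IsIdempotentElem f := hgidem.one_sub
    have hπf : π f = 1 - ebar := by rw [hfdef, map_sub, map_one, hπg]
    -- f ≡ (1-a)*y mod T R
    obtain ⟨j, hj⟩ : ∃ j : R, f - (1 - a) * y = T * j := by
      rw [← hker, map_sub, hπf, map_mul, map_sub, map_one, hy, ← hybar, sub_self]
    obtain ⟨L, hL1, hL2⟩ := geom_inv hc hsep hcomplete j
    -- trick 1: f = f * ((1-a) * y * L)
    have hfeq : f * ((1 - a) * y * L) = f := by
      have h1 : f * (1 - T * j) = f * ((1 - a) * y) := by
        have h2 : (1 - a) * y = f - T * j := by rw [← hj]; abel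
        rw [h2, mul_sub, mul_sub, mul_one, hfidem.eq]
      calc f * ((1 - a) * y * L) = f * ((1 - a) * y) * L :=
            (mul_assoc f ((1 - a) * y) L).symm
        _ = f * (1 - T * j) * L := by rw [h1]
        _ = f * ((1 - T * j) * L) := mul_assoc _ _ _
        _ = f := by rw [hL1, mul_one]
    set h : R := (1 - a) * (y * L * f) with hhdef
    have hhidem : IsIdempotentElem h := by
      show h * h = h
      calc h * h = (1 - a) * (y * L) * (f * ((1 - a) * (y * L * f))) := by
            rw [hhdef]; noncomm_ring
        _ = (1 - a) * (y * L) * (f * ((1 - a) * (y * L) * f)) := by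
            rw [mul_assoc (1 - a) (y * L) f]
        _ = (1 - a) * (y * L) * (f * ((1 - a) * (y * L)) * f) := by
            rw [mul_assoc f ((1 - a) * (y * L)) f]
        _ = (1 - a) * (y * L) * (f * ((1 - a) * y * L) * f) := by
            rw [mul_assoc (1 - a) y L]
        _ = (1 - a) * (y * L) * (f * f) := by rw [hfeq]
        _ = (1 - a) * (y * L) * f := by rw [hfidem.eq]
        _ = h := by rw [hhdef, mul_assoc]
    have hπL : π L = 1 := by
      have h0 : π (T * j) = 0 := (hker _).mpr ⟨j, rfl⟩
      have h1 := congrArg π hL1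
      simp only [map_mul, map_sub, map_one, h0, sub_zero, one_mul] at h1
      exact h1
    have hπh : π h = 1 - ebar := by
      have hππ : π ((1 - a) * (y * L * f)) = (1 - π a) * (π y * π L * π f) := by
        rw [map_mul, map_sub, map_one, map_mul, map_mul]
      rw [hhdef, hππ, hy, hπL, hπf, mul_one, ← mul_assoc, ← hybar]
      exact hebar.one_sub
    -- p = 1 - h
    set p : R := 1 - h with hpdef
    have hpidem : IsIdempotentElem p := hhidem.one_sub
    have hπp : π p = ebar := by
      rw [hpdef, map_sub, map_one, hπh]; abel
    obtain ⟨i, hi⟩ : ∃ i : R, p - a * x = T * i := by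
      rw [← hker, map_sub, hπp, map_mul, hx, ← hxbar, sub_self]
    obtain ⟨M, hM1, hM2⟩ := geom_inv hc hsep hcomplete i
    -- trick 2: p = p * (a * (x * M))
    set d : R := a * (x * M) with hddef
    have hpd : p * d = p := by
      have h1 : p * (1 - T * i) = p * (a * x) := by
        have h2 : a * x = p - T * i := by rw [← hi]; abel
        rw [h2, mul_sub, mul_sub, mul_one, hpidem.eq]
      calc p * d = p * (a * x * M) := by rw [hddef, mul_assoc]
        _ = p * (a * x) * M := (mul_assoc p (a * x) M).symm
        _ = p * (1 - T * i) * M := by rw [h1]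
        _ = p * ((1 - T * i) * M) := mul_assoc _ _ _
        _ = p := by rw [hM1, mul_one]
    -- the final idempotent
    refine ⟨d * p, ?_, ⟨x * M * p, ?_⟩, ⟨y * L * f * (1 - d * p), ?_⟩⟩
    · show d * p * (d * p) = d * p
      calc d * p * (d * p) = d * (p * d) * p := by
            rw [mul_assoc d p (d * p), ← mul_assoc p d p, ← mul_assoc d (p * d) p]
        _ = d * p * p := by rw [hpd]
        _ = d * (p * p) := mul_assoc _ _ _
        _ = d * p := by rw [hpidem.eq]
    · rw [hddef, mul_assoc]
    · have hpe : p * (d * p) = p := by rw [← mul_assoc, hpd, hpidem.eq]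
      have key : 1 - d * p = (1 - p) * (1 - d * p) := by
        have expand : (1 - p) * (1 - d * p) = 1 - d * p - p + p * (d * p) := by
          noncomm_ring
        rw [expand, hpe]; abel
      have h1p : (1 : R) - p = (1 - a) * (y * L * f) := by rw [hpdef, hhdef]; abel
      calc (1 : R) - d * p = (1 - p) * (1 - d * p) := key
        _ = (1 - a) * (y * L * f) * (1 - d * p) := by rw [h1p]
        _ = (1 - a) * (y * L * f * (1 - d * p)) := mul_assoc _ _ _
  · -- R exchange → A exchange
    intro hR a
    obtain ⟨r, hr⟩ := hsurj a
    obtain ⟨e, he, ⟨x, hx⟩, ⟨y, hy⟩⟩ := hR r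
    refine ⟨π e, ?_, ⟨π x, ?_⟩, ⟨π y, ?_⟩⟩
    · show π e * π e = π e
      rw [← map_mul, he]
    · rw [hx, map_mul, hr]
    · have h := congrArg π hy
      rw [map_sub, map_one, map_mul, map_sub, map_one, hr] at h
      exact h
end

section
/- Let R be an associative unital ring and R[[X]] the ring of formal power series over R. Then: R is clean if and only if R[[X]] is clean; R is an exchange ring if and only if R[[X]] is an exchange ring; and R is uniquely clean if and only if R[[X]] is uniquely clean. -/
/-!
`constantCoeff : R⟦X⟧ →+* R` is a local homomorphism with the ring section `C`. Clean and
exchange rings pass to quotients, uniquely clean rings to retracts. Conversely, clean and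
exchange decompositions lift along a local homomorphism with a section: lift the idempotent by
the section and correct by a unit. Uniqueness upstairs needs that idempotents with the same image
are equal. In a uniquely clean ring idempotents are central, so their images under `C` are
central in `R⟦X⟧`, and two commuting idempotents `E`, `F` with equal image agree because
`E (1 - F)` is an idempotent in the kernel of a local homomorphism, hence zero.
-/

section Descent

variable {R S : Type*} [Ring R] [Ring S] (φ : S →+* R)

theorem IsCleanRing.of_surjective (hφ : Function.Surjective φ) (h : IsCleanRing S) :
    IsCleanRing R := by
  intro a
  obtain ⟨s, rfl⟩ := hφ a
  obtain ⟨e, u, he, hu, rfl⟩ := h s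
  exact ⟨φ e, φ u, he.map φ, hu.map φ, map_add φ e u⟩

theorem IsExchangeRing.of_surjective (hφ : Function.Surjective φ) (h : IsExchangeRing S) :
    IsExchangeRing R := by
  intro a
  obtain ⟨s, rfl⟩ := hφ a
  obtain ⟨e, he, ⟨x, hx⟩, ⟨y, hy⟩⟩ := h s
  refine ⟨φ e, he.map φ, ⟨φ x, ?_⟩, ⟨φ y, ?_⟩⟩
  · rw [hx, map_mul]
  · rw [← map_one φ, ← map_sub, hy, map_mul, map_sub, map_one]

theorem IsUniquelyCleanRing.of_leftInverse (σ : R →+* S) (hσ : Function.LeftInverse φ σ)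
    (h : IsUniquelyCleanRing S) : IsUniquelyCleanRing R := by
  intro a
  obtain ⟨p, ⟨hp₁, hp₂, hp₃⟩, hp⟩ := h (σ a)
  refine ⟨(φ p.1, φ p.2), ⟨hp₁.map φ, hp₂.map φ, by rw [← map_add, ← hp₃, hσ]⟩, ?_⟩
  rintro ⟨e, u⟩ ⟨he, hu, rfl⟩
  have hlift : (σ e, σ u) = p := hp _ ⟨he.map σ, hu.map σ, map_add σ e u⟩
  rw [← hlift]
  simp only [hσ e, hσ u]

end Descent

theorem IsUniquelyCleanRing.mul_mul_one_sub_eq_zero_s18 {R : Type*} [Ring R]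
    (h : IsUniquelyCleanRing R) {e : R} (he : IsIdempotentElem e) (r : R) :
    e * r * (1 - e) = 0 := by
  set s := e * r * (1 - e)
  have hes : e * s = s := by simp only [s, ← mul_assoc, he.eq]
  have hse : s * e = 0 := by simp only [s, mul_assoc, he.one_sub_mul_self, mul_zero]
  have hss : s * s = 0 := by nth_rewrite 2 [← hes]; rw [← mul_assoc, hse, zero_mul]
  have hidem : IsIdempotentElem (e + s) := by
    rw [IsIdempotentElem, add_mul, mul_add, mul_add, he.eq, hes, hse, hss, add_zero, add_zero]
  -- `e + s - 1` decomposes both as `(e + s) + (-1)` and as `e + (s - 1)`.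
  obtain ⟨p, -, hp⟩ := h (e + s - 1)
  have h₁ := hp (e + s, -1) ⟨hidem, isUnit_one.neg, sub_eq_add_neg _ _⟩
  have h₂ := hp (e, s - 1)
    ⟨he, IsNilpotent.isUnit_sub_one ⟨2, by rw [pow_two, hss]⟩, add_sub_assoc _ _ _⟩
  simpa using congrArg Prod.fst (h₁.trans h₂.symm)

theorem IsUniquelyCleanRing.mem_center_of_isIdempotentElem {R : Type*} [Ring R]
    (h : IsUniquelyCleanRing R) {e : R} (he : IsIdempotentElem e) : e ∈ Set.center R := by
  refine Semigroup.mem_center_iff.mpr fun r => ?_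
  have h₁ := h.mul_mul_one_sub_eq_zero_s18 he r
  have h₂ := h.mul_mul_one_sub_eq_zero_s18 he.one_sub r
  rw [sub_sub_cancel] at h₂
  have h₁' : e * r = e * r * e := by rw [← sub_eq_zero, ← h₁]; noncomm_ring
  have h₂' : r * e = e * r * e := by rw [← sub_eq_zero, ← h₂]; noncomm_ring
  exact h₂'.trans h₁'.symm

section Lifting

variable {R S : Type*} [Ring R] [Ring S] (φ : S →+* R) [IsLocalHom φ]

theorem IsIdempotentElem.eq_zero_of_map_eq_zero {x : S} (hx : IsIdempotentElem x)
    (hφx : φ x = 0) : x = 0 := by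
  have hunit : IsUnit (1 - x) := isUnit_of_map_unit φ _ (by simp [hφx])
  exact hunit.mul_left_eq_zero.mp hx.mul_one_sub_self

theorem IsIdempotentElem.mul_eq_self_of_commute_of_map_eq {E F : S} (hE : IsIdempotentElem E)
    (hF : IsIdempotentElem F) (hEF : Commute E F) (hφ : φ E = φ F) : E * F = E := by
  have hE₀ : IsIdempotentElem (E * (1 - F)) :=
    hE.mul_of_commute ((Commute.one_right E).sub_right hEF) hF.one_sub
  have h₀ := hE₀.eq_zero_of_map_eq_zero φ <| by
    rw [map_mul, map_sub, map_one, hφ, mul_sub, mul_one, ← map_mul, hF.eq, sub_self]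
  rwa [mul_sub, mul_one, sub_eq_zero, eq_comm] at h₀

theorem IsIdempotentElem.eq_of_commute_of_map_eq {E F : S} (hE : IsIdempotentElem E)
    (hF : IsIdempotentElem F) (hEF : Commute E F) (hφ : φ E = φ F) : E = F :=
  calc E = E * F := (hE.mul_eq_self_of_commute_of_map_eq φ hF hEF hφ).symm
    _ = F * E := hEF.eq
    _ = F := hF.mul_eq_self_of_commute_of_map_eq φ hE hEF.symm hφ.symm

variable {σ : R →+* S} (hσ : Function.LeftInverse φ σ)
include hσ

theorem isUnit_sub_of_map_eq_add {s : S} {e u : R} (hu : IsUnit u) (hs : φ s = e + u) :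
    IsUnit (s - σ e) :=
  isUnit_of_map_unit φ _ (by rwa [map_sub, hs, hσ, add_sub_cancel_left])

theorem IsCleanRing.of_isLocalHom (h : IsCleanRing R) : IsCleanRing S := by
  intro s
  obtain ⟨e, u, he, hu, hs⟩ := h (φ s)
  exact ⟨σ e, s - σ e, he.map σ, isUnit_sub_of_map_eq_add φ hσ hu hs,
    (add_sub_cancel _ _).symm⟩

theorem IsExchangeRing.of_isLocalHom (h : IsExchangeRing R) : IsExchangeRing S := by
  intro s
  obtain ⟨e, he, ⟨x, hx⟩, ⟨y, hy⟩⟩ := h (φ s)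
  set g := σ e
  have hg : IsIdempotentElem g := he.map σ
  set E := s * σ x * g
  set F := (1 - s) * σ y * (1 - g)
  have hφE : φ E = e := by simp only [E, g, map_mul, hσ _, ← hx, he.eq]
  have hφF : φ F = 1 - e := by
    simp only [F, g, map_mul, map_sub, map_one, hσ _, ← hy, he.one_sub.eq]
  obtain ⟨V, hV⟩ : IsUnit (E + F) := isUnit_of_map_unit φ _ (by simp [hφE, hφF])
  have hEg : E * g = E := by simp only [E, mul_assoc, hg.eq]
  have hFg : F * g = 0 := by simp only [F, mul_assoc, hg.one_sub_mul_self, mul_zero]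
  -- `(E + F) g = E`, so `V⁻¹ E = g`, which makes `E V⁻¹` idempotent.
  have hVE : (↑V⁻¹ : S) * E = g := by
    rw [← hEg, ← add_zero (E * g), ← hFg, ← add_mul, ← hV, ← mul_assoc, V.inv_mul, one_mul]
  refine ⟨E * ↑V⁻¹, ?_, ⟨σ x * g * ↑V⁻¹, by simp only [E, mul_assoc]⟩,
    ⟨σ y * (1 - g) * ↑V⁻¹, ?_⟩⟩
  · rw [IsIdempotentElem, mul_assoc, ← mul_assoc _ E, hVE, ← mul_assoc, hEg]
  · have hsum : E * ↑V⁻¹ + F * ↑V⁻¹ = 1 := by rw [← add_mul, ← hV, V.mul_inv]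
    calc 1 - E * ↑V⁻¹ = F * ↑V⁻¹ := by rw [← hsum, add_sub_cancel_left]
      _ = (1 - s) * (σ y * (1 - g) * ↑V⁻¹) := by simp only [F, mul_assoc]

theorem IsUniquelyCleanRing.of_isLocalHom (hcenter : ∀ r ∈ Set.center R, σ r ∈ Set.center S)
    (h : IsUniquelyCleanRing R) : IsUniquelyCleanRing S := by
  intro s
  obtain ⟨p, ⟨hp₁, hp₂, hp₃⟩, hp⟩ := h (φ s)
  refine ⟨(σ p.1, s - σ p.1),
    ⟨hp₁.map σ, isUnit_sub_of_map_eq_add φ hσ hp₂ hp₃, (add_sub_cancel _ _).symm⟩, ?_⟩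
  rintro ⟨E, U⟩ ⟨hE, hU, rfl⟩
  have hφE : φ E = p.1 :=
    congrArg Prod.fst (hp (φ E, φ U) ⟨hE.map φ, hU.map φ, map_add φ E U⟩)
  have hcomm : Commute E (σ p.1) :=
    Semigroup.mem_center_iff.mp (hcenter _ (h.mem_center_of_isIdempotentElem hp₁)) E
  obtain rfl : E = σ p.1 := hE.eq_of_commute_of_map_eq φ (hp₁.map σ) hcomm (by rw [hφE, hσ])
  simp

end Lifting

namespace PowerSeries

variable {R : Type*} [Ring R]

instance isLocalHom_constantCoeff : IsLocalHom (constantCoeff (R := R)) :=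
  ⟨fun _ => isUnit_iff_constantCoeff.mpr⟩

theorem C_mem_center {r : R} (hr : r ∈ Set.center R) : C r ∈ Set.center (PowerSeries R) := by
  rw [Semigroup.mem_center_iff] at hr ⊢
  intro f
  ext n
  rw [coeff_mul_C, coeff_C_mul, hr]

end PowerSeries

open PowerSeries in
/-- Let `R` be an associative unital ring and `R[[X]]` the ring of formal
power series over `R`.  Then `R` is clean iff `R[[X]]` is clean, `R` is an exchange ring
iff `R[[X]]` is an exchange ring, and `R` is uniquely clean iff `R[[X]]` is uniquely
clean. -/
theorem clean_exchange_uniquelyClean_powerSeries_iff (R : Type*) [Ring R] :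
    (IsCleanRing R ↔ IsCleanRing (PowerSeries R)) ∧
    (IsExchangeRing R ↔ IsExchangeRing (PowerSeries R)) ∧
    (IsUniquelyCleanRing R ↔ IsUniquelyCleanRing (PowerSeries R)) := by
  have hσ : Function.LeftInverse (constantCoeff (R := R)) C := constantCoeff_C
  exact ⟨⟨.of_isLocalHom _ hσ, .of_surjective _ hσ.surjective⟩,
    ⟨.of_isLocalHom _ hσ, .of_surjective _ hσ.surjective⟩,
    ⟨.of_isLocalHom _ hσ fun _ => C_mem_center, .of_leftInverse _ _ hσ⟩⟩
end

section
/- Let C be a finite nonempty partially ordered set and R an associative unital ring, and let I(C, R) be the incidence algebra of C over R, i.e. the ring of functions M : C × C → R with M(i, j) = 0 unless i ≤ j, with pointwise addition and convolution product (MN)(i, j) = Σ_{i ≤ l ≤ j} M(i, l)·N(l, j), and with unit the Kronecker delta. Then I(C, R) is clean (respectively nil-clean, respectively an exchange ring) if and only if R is clean (respectively nil-clean, respectively an exchange ring). -/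
lemma pow_succ_eq_add_sq_sub {T : Type*} [Ring T] (b : T) :
    ∀ m : ℕ, ∃ c : T, b ^ (m+1) = b + (b*b - b) * c ∧ Commute b c := by
  intro m
  induction m with
  | zero => exact ⟨0, by simp, Commute.zero_right b⟩
  | succ m ih =>
    obtain ⟨c, hc, hcomm⟩ := ih
    refine ⟨1 + c * b, ?_, ?_⟩
    · rw [pow_succ, hc]
      simp only [mul_add, add_mul, mul_sub, sub_mul, mul_assoc, mul_one, one_mul]
      abel
    · exact (Commute.one_right b).add_right (hcomm.mul_right (Commute.refl b))

lemma suitable_of_nilpotent {T : Type*} [Ring T] (b : T) (h : IsNilpotent (b*b - b)) :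
    ∃ f : T, IsIdempotentElem f ∧ (∃ r, f = b * r) ∧ (∃ s, 1 - f = (1 - b) * s) := by
  obtain ⟨n0, hn0⟩ := h
  have htn : (b*b - b) ^ (n0+1) = 0 := by rw [pow_succ, hn0, zero_mul]
  obtain ⟨c, hc, hbc⟩ := pow_succ_eq_add_sq_sub b n0
  obtain ⟨d', hd', hbd'⟩ := pow_succ_eq_add_sq_sub (1 - b) n0
  have hsq : (1-b) * (1-b) - (1-b) = b*b - b := by noncomm_ring
  rw [hsq] at hd'
  have hbd : Commute b d' := by
    have : Commute (1 - (1-b)) d' := (Commute.one_left d').sub_left hbd'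
    simpa using this
  have hu : b ^ (n0+1) + (1-b) ^ (n0+1) = 1 + (b*b - b) * (c + d') := by
    rw [hc, hd']
    simp only [mul_add, add_mul, mul_sub, sub_mul, mul_assoc, mul_one, one_mul]
    abel
  have hct : Commute (b*b - b) c := (hbc.mul_left hbc).sub_left hbc
  have hdt : Commute (b*b - b) d' := (hbd.mul_left hbd).sub_left hbd
  have hnil : IsNilpotent ((b*b - b) * (c + d')) := by
    refine ⟨n0+1, ?_⟩
    rw [(hct.add_right hdt).mul_pow, htn, zero_mul]
  have hunit : IsUnit (b ^ (n0+1) + (1-b) ^ (n0+1)) := by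
    rw [hu]; exact hnil.isUnit_one_add
  obtain ⟨u, huu⟩ := hunit
  set v : T := ↑u⁻¹ with hv
  have hbu : Commute b ↑u := by
    rw [huu]
    exact ((Commute.refl b).pow_right (n0+1)).add_right
      (((Commute.one_right b).sub_right (Commute.refl b)).pow_right (n0+1))
  have hbv : Commute b v := hbu.units_inv_right
  have hb1v : Commute (1 - b) v := (Commute.one_left v).sub_left hbv
  have huv : (b ^ (n0+1) + (1-b) ^ (n0+1)) * v = 1 := by rw [← huu, hv]; exact u.mul_inv
  have h1f : 1 - b ^ (n0+1) * v = (1-b) ^ (n0+1) * v := by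
    rw [add_mul] at huv
    linear_combination (norm := noncomm_ring) -huv
  refine ⟨b ^ (n0+1) * v, ?_, ?_, ?_⟩
  · have key : (b ^ (n0+1) * v) * (1 - b ^ (n0+1) * v) = 0 := by
      rw [h1f]
      have hv1 : v * ((1-b)^(n0+1) * v) = (1-b)^(n0+1) * (v * v) := by
        rw [← mul_assoc, (hb1v.pow_left (n0+1)).symm.eq, mul_assoc]
      calc b ^ (n0+1) * v * ((1-b) ^ (n0+1) * v)
          = b ^ (n0+1) * ((1-b) ^ (n0+1) * (v * v)) := by rw [mul_assoc, hv1]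
        _ = (b * (1-b)) ^ (n0+1) * (v*v) := by
            rw [((Commute.one_right b).sub_right (Commute.refl b)).mul_pow, mul_assoc]
        _ = 0 := by
            have hb1 : b * (1 - b) = -(b*b - b) := by noncomm_ring
            rw [hb1, neg_pow, htn, mul_zero, zero_mul]
    rw [mul_sub, mul_one] at key
    unfold IsIdempotentElem
    linear_combination (norm := noncomm_ring) -key
  · exact ⟨b ^ n0 * v, by rw [pow_succ', mul_assoc]⟩
  · exact ⟨(1-b) ^ n0 * v, by rw [h1f, pow_succ', mul_assoc]⟩

/-- Let `C` be a finite nonempty poset, `R` an associative unital ring, and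
`I(C, R)` the incidence algebra of `C` over `R`: the ring of functions `M : C × C → R`
with `M i j = 0` unless `i ≤ j`, with pointwise addition, convolution product
`(M * N) i j = Σ_{i ≤ l ≤ j} M i l * N l j`, and unit the Kronecker delta.  (Here the
incidence algebra is encoded as a ring `D` identified with the set of such functions via
the bijection `ι`, subject to the stated addition, multiplication and unit formulas.)
Then `I(C, R)` is clean (resp. nil-clean, resp. an exchange ring) if and only if `R` is
clean (resp. nil-clean, resp. an exchange ring). -/
theorem incidenceAlgebra_clean_nilClean_exchange_iff
    {C R D : Type*} [Fintype C] [Nonempty C] [PartialOrder C]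
    [DecidableEq C] [DecidableRel (fun i j : C => i ≤ j)] [Ring R] [Ring D]
    (ι : {M : C → C → R // ∀ i j : C, ¬ i ≤ j → M i j = 0} ≃ D)
    (hadd : ∀ M N, ((ι.symm (ι M + ι N) : {M : C → C → R // ∀ i j : C, ¬ i ≤ j → M i j = 0}) : C → C → R)
      = fun i j => (M : C → C → R) i j + (N : C → C → R) i j)
    (hmul : ∀ M N, ((ι.symm (ι M * ι N) : {M : C → C → R // ∀ i j : C, ¬ i ≤ j → M i j = 0}) : C → C → R)
      = fun i j => ∑ l ∈ Finset.univ.filter (fun l : C => i ≤ l ∧ l ≤ j),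
          (M : C → C → R) i l * (N : C → C → R) l j)
    (hone : ((ι.symm (1 : D) : {M : C → C → R // ∀ i j : C, ¬ i ≤ j → M i j = 0}) : C → C → R)
      = fun i j => if i = j then 1 else 0) :
    (IsCleanRing D ↔ IsCleanRing R) ∧
    (IsNilCleanRing D ↔ IsNilCleanRing R) ∧
    (IsExchangeRing D ↔ IsExchangeRing R) := by
  classical
  set F : D → C → C → R := fun d => ((ι.symm d :
      {M : C → C → R // ∀ i j : C, ¬ i ≤ j → M i j = 0}) : C → C → R) with hF
  -- basic pointwise equations
  have hFinj : ∀ {x y : D}, F x = F y → x = y := by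
    intro x y h
    simp only [hF] at h
    exact ι.symm.injective (Subtype.ext h)
  have hFaddP : ∀ (x y : D) (i j : C), F (x + y) i j = F x i j + F y i j := by
    intro x y i j
    have h := hadd (ι.symm x) (ι.symm y)
    rw [Equiv.apply_symm_apply, Equiv.apply_symm_apply] at h
    exact congrFun (congrFun h i) j
  have hFmulP : ∀ (x y : D) (i j : C), F (x * y) i j
      = ∑ l ∈ Finset.univ.filter (fun l : C => i ≤ l ∧ l ≤ j), F x i l * F y l j := by
    intro x y i j
    have h := hmul (ι.symm x) (ι.symm y)
    rw [Equiv.apply_symm_apply, Equiv.apply_symm_apply] at h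
    exact congrFun (congrFun h i) j
  have hFoneP : ∀ i j : C, F 1 i j = if i = j then (1:R) else 0 := by
    intro i j
    exact congrFun (congrFun hone i) j
  have hFvan : ∀ (d : D) (i j : C), ¬ i ≤ j → F d i j = 0 := fun d => (ι.symm d).2
  have hFzeroP : ∀ i j : C, F 0 i j = 0 := by
    intro i j
    have h := hFaddP 0 0 i j
    rw [add_zero] at h
    exact left_eq_add.mp h
  have hFsubP : ∀ (x y : D) (i j : C), F (x - y) i j = F x i j - F y i j := by
    intro x y i j
    have h := hFaddP (x - y) y i j
    rw [sub_add_cancel] at h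
    rw [eq_sub_iff_add_eq, ← h]
  have filter_diag : ∀ i : C, Finset.univ.filter (fun l : C => i ≤ l ∧ l ≤ i) = {i} := by
    intro i
    ext l
    simp only [Finset.mem_filter, Finset.mem_univ, true_and, Finset.mem_singleton]
    constructor
    · rintro ⟨h1, h2⟩; exact le_antisymm h2 h1
    · rintro rfl; exact ⟨le_refl l, le_refl l⟩
  have hmulD : ∀ (x y : D) (i : C), F (x * y) i i = F x i i * F y i i := by
    intro x y i
    rw [hFmulP x y i i, filter_diag i, Finset.sum_singleton]
  have honeD : ∀ i : C, F 1 i i = 1 := by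
    intro i; rw [hFoneP i i, if_pos rfl]
  have hpowD : ∀ (x : D) (k : ℕ) (i : C), F (x ^ k) i i = (F x i i) ^ k := by
    intro x k i
    induction k with
    | zero => rw [pow_zero, pow_zero, honeD]
    | succ k ih => rw [pow_succ, pow_succ, hmulD, ih]
  -- diagonal embedding
  set dg : (C → R) → D := fun a => ι ⟨fun i j => if i = j then a i else 0,
    fun i j hij => if_neg (fun h => hij (le_of_eq h))⟩ with hdg
  have hFdgP : ∀ (a : C → R) (i j : C), F (dg a) i j = if i = j then a i else 0 := by
    intro a i j
    simp only [hF, hdg, Equiv.symm_apply_apply]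
  have hFdgD : ∀ (a : C → R) (i : C), F (dg a) i i = a i := by
    intro a i; rw [hFdgP, if_pos rfl]
  have hdg_mul : ∀ a b : C → R, dg a * dg b = dg (fun i => a i * b i) := by
    intro a b
    apply hFinj
    funext i j
    rw [hFmulP, hFdgP]
    simp only [hFdgP]
    rcases eq_or_ne i j with rfl | hij
    · rw [filter_diag i, Finset.sum_singleton]
      simp
    · rw [if_neg hij]
      apply Finset.sum_eq_zero
      intro l _
      rcases eq_or_ne i l with rfl | hil
      · rw [if_neg hij, mul_zero]
      · rw [if_neg hil, zero_mul]
  have hdg_one : dg (fun _ => (1:R)) = 1 := by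
    apply hFinj
    funext i j
    simp [hFdgP, hFoneP]
  have hdg_unit : ∀ u : C → R, (∀ i, IsUnit (u i)) → IsUnit (dg u) := by
    intro u hu
    choose w hw using hu
    refine ⟨⟨dg u, dg (fun i => ↑(w i)⁻¹), ?_, ?_⟩, rfl⟩
    · rw [hdg_mul, ← hdg_one]
      congr 1
      funext i
      rw [← hw i, Units.mul_inv]
    · rw [hdg_mul, ← hdg_one]
      congr 1
      funext i
      rw [← hw i, Units.inv_mul]
  -- height function and nilpotency of strictly triangular elements
  set ht : C → ℕ := fun i => (Finset.univ.filter (fun k : C => k < i)).card with hht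
  have htmono : ∀ {i j : C}, i < j → ht i < ht j := by
    intro i j hij
    apply Finset.card_lt_card
    have hsub : Finset.univ.filter (fun k : C => k < i) ⊆
        Finset.univ.filter (fun k : C => k < j) := by
      intro k hk
      simp only [Finset.mem_filter, Finset.mem_univ, true_and] at hk ⊢
      exact lt_trans hk hij
    rw [Finset.ssubset_iff_of_subset hsub]
    exact ⟨i, by simp [hij], by simp⟩
  have htbound : ∀ j : C, ht j < Fintype.card C := by
    intro j
    rw [← Finset.card_univ]
    apply Finset.card_lt_card
    rw [Finset.ssubset_iff_of_subset (Finset.filter_subset _ _)]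
    exact ⟨j, Finset.mem_univ j, by simp⟩
  have hstrictpow : ∀ d : D, (∀ i, F d i i = 0) → d ^ (Fintype.card C) = 0 := by
    intro d hd
    have key : ∀ (k : ℕ) (i j : C), F (d ^ k) i j ≠ 0 → ht i + k ≤ ht j := by
      intro k
      induction k with
      | zero =>
        intro i j h
        rw [pow_zero, hFoneP i j] at h
        rcases eq_or_ne i j with rfl | hij
        · omega
        · exact absurd (if_neg hij) h
      | succ k ih =>
        intro i j h
        rw [pow_succ, hFmulP (d ^ k) d i j] at h
        obtain ⟨l, _, hterm⟩ := Finset.exists_ne_zero_of_sum_ne_zero h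
        have h1 : F (d ^ k) i l ≠ 0 := fun h0 => hterm (by rw [h0, zero_mul])
        have h2 : F d l j ≠ 0 := fun h0 => hterm (by rw [h0, mul_zero])
        have hlj : l ≤ j := by
          by_contra hc
          exact h2 (hFvan d l j hc)
        have hlj' : l ≠ j := by
          rintro rfl
          exact h2 (hd l)
        have hb := htmono (lt_of_le_of_ne hlj hlj')
        have ha := ih i l h1
        omega
    apply hFinj
    funext i j
    rw [hFzeroP i j]
    by_contra h
    have h1 := key (Fintype.card C) i j h
    have h2 := htbound j
    omega
  have hstrictnil : ∀ d : D, (∀ i, F d i i = 0) → IsNilpotent d :=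
    fun d hd => ⟨Fintype.card C, hstrictpow d hd⟩
  have i0 : C := Classical.arbitrary C
  refine ⟨⟨?_, ?_⟩, ⟨?_, ?_⟩, ⟨?_, ?_⟩⟩
  · -- clean D → clean R
    intro hD a
    obtain ⟨E, U, hE, hU, hsum⟩ := hD (dg fun _ => a)
    obtain ⟨w, hw⟩ := hU
    refine ⟨F E i0 i0, F U i0 i0, ?_, ?_, ?_⟩
    · show F E i0 i0 * F E i0 i0 = F E i0 i0
      rw [← hmulD, hE.eq]
    · have hmul1 : U * ↑w⁻¹ = 1 := by rw [← hw]; exact w.mul_inv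
      have hmul2 : ↑w⁻¹ * U = 1 := by rw [← hw]; exact w.inv_mul
      refine ⟨⟨F U i0 i0, F (↑w⁻¹ : D) i0 i0, ?_, ?_⟩, rfl⟩
      · rw [← hmulD, hmul1, honeD]
      · rw [← hmulD, hmul2, honeD]
    · have hh := hFdgD (fun _ => a) i0
      rw [hsum, hFaddP] at hh
      exact hh.symm
  · -- clean R → clean D
    intro hR M
    choose e u he hu hsum using fun i => hR (F M i i)
    have hEidem : IsIdempotentElem (dg e) := by
      show dg e * dg e = dg e
      rw [hdg_mul]
      congr 1
      funext i
      exact he i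
    obtain ⟨w, hw⟩ := hdg_unit u hu
    have hstrict : ∀ i, F ((↑w⁻¹ : D) * (M - dg e - dg u)) i i = 0 := by
      intro i
      rw [hmulD]
      have hz : F (M - dg e - dg u) i i = 0 := by
        rw [hFsubP, hFsubP, hFdgD, hFdgD, hsum i]
        abel
      rw [hz, mul_zero]
    have hunit1 : IsUnit (1 + (↑w⁻¹ : D) * (M - dg e - dg u)) :=
      (hstrictnil _ hstrict).isUnit_one_add
    refine ⟨dg e, M - dg e, hEidem, ?_, by abel⟩
    have hfact : M - dg e = ↑w * (1 + (↑w⁻¹ : D) * (M - dg e - dg u)) := by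
      rw [mul_add, mul_one, ← mul_assoc, w.mul_inv, one_mul, hw]
      abel
    rw [hfact]
    exact w.isUnit.mul hunit1
  · -- nil-clean D → nil-clean R
    intro hD a
    obtain ⟨E, U, hE, hU, hsum⟩ := hD (dg fun _ => a)
    obtain ⟨k, hk⟩ := hU
    refine ⟨F E i0 i0, F U i0 i0, ?_, ⟨k, ?_⟩, ?_⟩
    · show F E i0 i0 * F E i0 i0 = F E i0 i0
      rw [← hmulD, hE.eq]
    · rw [← hpowD, hk, hFzeroP]
    · have hh := hFdgD (fun _ => a) i0
      rw [hsum, hFaddP] at hh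
      exact hh.symm
  · -- nil-clean R → nil-clean D
    intro hR M
    choose e nf he hn hsum using fun i => hR (F M i i)
    have hEidem : IsIdempotentElem (dg e) := by
      show dg e * dg e = dg e
      rw [hdg_mul]
      congr 1
      funext i
      exact he i
    choose k hk using hn
    have hVdiag : ∀ i, F ((M - dg e) ^ (Finset.univ.sup k)) i i = 0 := by
      intro i
      rw [hpowD, hFsubP, hFdgD, hsum i, add_sub_cancel_left,
        ← Nat.add_sub_cancel' (Finset.le_sup (Finset.mem_univ i) : k i ≤ Finset.univ.sup k),
        pow_add, hk i, zero_mul]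
    refine ⟨dg e, M - dg e, hEidem, ⟨(Finset.univ.sup k) * Fintype.card C, ?_⟩, by abel⟩
    rw [pow_mul]
    exact hstrictpow _ hVdiag
  · -- exchange D → exchange R
    intro hD a
    obtain ⟨E, hE, ⟨X, hX⟩, ⟨Y, hY⟩⟩ := hD (dg fun _ => a)
    refine ⟨F E i0 i0, ?_, ⟨F X i0 i0, ?_⟩, ⟨F Y i0 i0, ?_⟩⟩
    · show F E i0 i0 * F E i0 i0 = F E i0 i0
      rw [← hmulD, hE.eq]
    · rw [hX, hmulD, hFdgD]
    · have h1 : F (1 - E) i0 i0 = 1 - F E i0 i0 := by rw [hFsubP, honeD]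
      have h2 : F ((1 : D) - dg fun _ => a) i0 i0 = 1 - a := by rw [hFsubP, honeD, hFdgD]
      rw [← h1, hY, hmulD, h2]
  · -- exchange R → exchange D
    intro hR M
    choose e he hex hey using fun i => hR (F M i i)
    choose x hx using hex
    choose y hy using hey
    set n : D := M * dg x + (1 - M) * dg y - 1 with hn
    have hnstrict : ∀ i, F n i i = 0 := by
      intro i
      rw [hn, hFsubP, hFaddP, hmulD, hmulD, hFdgD, hFdgD, honeD]
      have h2 : F ((1:D) - M) i i = 1 - F M i i := by rw [hFsubP, honeD]
      rw [h2, ← hx i, ← hy i]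
      abel
    have hunit : IsUnit (1 + n) := (hstrictnil _ hnstrict).isUnit_one_add
    obtain ⟨w, hw⟩ := hunit
    have hw' : (M * dg x + (1 - M) * dg y) = ↑w := by
      rw [hw, hn]; abel
    have hsplit : M * (dg x * ↑w⁻¹) + (1 - M) * (dg y * ↑w⁻¹) = 1 := by
      rw [← mul_assoc, ← mul_assoc, ← add_mul, hw']
      exact w.mul_inv
    have hwinv_diag : ∀ i, F (↑w⁻¹ : D) i i = 1 := by
      intro i
      have h1 : F (↑w : D) i i = 1 := by
        rw [hw, hFaddP, honeD, hnstrict i, add_zero]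
      have h2 : F ((↑w : D) * ↑w⁻¹) i i = 1 := by rw [w.mul_inv, honeD]
      rw [hmulD, h1, one_mul] at h2
      exact h2
    have hbdiag : ∀ i, F (M * (dg x * ↑w⁻¹)) i i = e i := by
      intro i
      rw [hmulD, hmulD, hFdgD, hwinv_diag i, mul_one, ← hx i]
    have hbnil : IsNilpotent ((M * (dg x * ↑w⁻¹)) * (M * (dg x * ↑w⁻¹)) - M * (dg x * ↑w⁻¹)) := by
      apply hstrictnil
      intro i
      rw [hFsubP, hmulD, hbdiag i, (he i).eq, sub_self]
    obtain ⟨f, hfidem, ⟨r, hr⟩, ⟨s, hs⟩⟩ := suitable_of_nilpotent _ hbnil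
    have h1b : 1 - M * (dg x * ↑w⁻¹) = (1 - M) * (dg y * ↑w⁻¹) := by
      rw [sub_eq_iff_eq_add']
      exact hsplit.symm
    refine ⟨f, hfidem, ⟨dg x * ↑w⁻¹ * r, ?_⟩, ⟨dg y * ↑w⁻¹ * s, ?_⟩⟩
    · rw [hr, mul_assoc]
    · rw [hs, h1b, mul_assoc]
end
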